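/- arXiv:2408.14715 — 9 statements merged into one kernel-verified Lean document; each statement's English description precedes it below -/
import Mathlib

section
/- Let m be a complex Lie subalgebra of the complexification g^ℂ of a real Lie algebra g, with conjugation σ, such that g^ℂ = m ⊕ σ(m). Then the map J defined on g^ℂ by Jx = -ix for x ∈ m and Jx = ix for x ∈ σ(m) commutes with σ, hence restricts to a real linear map on g, satisfies J² = -Id, and has vanishing Nijenhuis tensor on g. -/
open TensorProduct

/-- The Nijenhuis tensor of an endomorphism `J` of a Lie algebra:
`N_J(x,y) = [x,y] + J[Jx,y] + J[x,Jy] - [Jx,Jy]`. -/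
def nijenhuis {R L : Type*} [CommRing R] [LieRing L] [Module R L]
    (J : L →ₗ[R] L) (x y : L) : L :=
  ⁅x, y⁆ + J ⁅J x, y⁆ + J ⁅x, J y⁆ - ⁅J x, J y⁆

/-- The conjugation `σ` of the complexification `ℂ ⊗[ℝ] g` with respect to the
real form `g`. -/
noncomputable def conjugation (L : Type*) [AddCommGroup L] [Module ℝ L] :
    (ℂ ⊗[ℝ] L) →ₗ[ℝ] (ℂ ⊗[ℝ] L) :=
  TensorProduct.map Complex.conjAe.toLinearMap LinearMap.id


section helpers

variable {L : Type*} [AddCommGroup L] [Module ℝ L]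

lemma conj_tmul (c : ℂ) (x : L) :
    conjugation L (c ⊗ₜ[ℝ] x) = (starRingEnd ℂ c) ⊗ₜ[ℝ] x := rfl

lemma conj_conj (x : ℂ ⊗[ℝ] L) : conjugation L (conjugation L x) = x := by
  induction x using TensorProduct.induction_on with
  | zero => simp
  | tmul c l => simp [conj_tmul]
  | add a b ha hb => simp [map_add, ha, hb]

lemma conj_smul (c : ℂ) (x : ℂ ⊗[ℝ] L) :
    conjugation L (c • x) = (starRingEnd ℂ c) • conjugation L x := by
  induction x using TensorProduct.induction_on with
  | zero => simp
  | tmul d l => rw [TensorProduct.smul_tmul', conj_tmul, conj_tmul, TensorProduct.smul_tmul',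
      smul_eq_mul, smul_eq_mul, map_mul]
  | add a b ha hb => simp only [smul_add, map_add, ha, hb]

noncomputable def imT (L : Type*) [AddCommGroup L] [Module ℝ L] : (ℂ ⊗[ℝ] L) →ₗ[ℝ] L :=
  TensorProduct.lift ((LinearMap.lsmul ℝ L).comp Complex.imLm)

noncomputable def reT (L : Type*) [AddCommGroup L] [Module ℝ L] : (ℂ ⊗[ℝ] L) →ₗ[ℝ] L :=
  TensorProduct.lift ((LinearMap.lsmul ℝ L).comp Complex.reLm)

lemma decompRe (x : ℂ ⊗[ℝ] L) :
    x = (1:ℂ) ⊗ₜ[ℝ] reT L x + Complex.I • ((1:ℂ) ⊗ₜ[ℝ] imT L x) := by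
  induction x using TensorProduct.induction_on with
  | zero => simp
  | tmul c l =>
      simp only [imT, reT, TensorProduct.lift.tmul, LinearMap.comp_apply, LinearMap.lsmul_apply,
        Complex.imLm_coe, Complex.reLm_coe, TensorProduct.smul_tmul', smul_eq_mul, mul_one,
        TensorProduct.tmul_smul]
      rw [← TensorProduct.add_tmul]
      norm_num [Complex.real_smul]
      rw [mul_comm, Complex.re_add_im]
  | add a b ha hb =>
      rw [map_add, map_add, TensorProduct.tmul_add, TensorProduct.tmul_add, smul_add]
      conv_lhs => rw [ha, hb]
      abel

lemma imT_conj (x : ℂ ⊗[ℝ] L) : imT L (conjugation L x) = - imT L x := by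
  induction x using TensorProduct.induction_on with
  | zero => simp
  | tmul c l => simp [conj_tmul, imT]
  | add a b ha hb => simp only [map_add, ha, hb]; abel

end helpers

section lie

variable {L : Type*} [LieRing L] [LieAlgebra ℝ L]

lemma conj_lie (x y : ℂ ⊗[ℝ] L) :
    conjugation L ⁅x, y⁆ = ⁅conjugation L x, conjugation L y⁆ := by
  have hza : ∀ a b c : ℂ ⊗[ℝ] L, ⁅a, b + c⁆ = ⁅a, b⁆ + ⁅a, c⁆ := fun a b c => lie_add a b c
  have hz0 : ∀ a : ℂ ⊗[ℝ] L, ⁅a, (0 : ℂ ⊗[ℝ] L)⁆ = 0 := fun a => lie_zero a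
  have h0z : ∀ a : ℂ ⊗[ℝ] L, ⁅(0 : ℂ ⊗[ℝ] L), a⁆ = 0 := fun a => zero_lie a
  have haz : ∀ a b c : ℂ ⊗[ℝ] L, ⁅a + b, c⁆ = ⁅a, c⁆ + ⁅b, c⁆ := fun a b c => add_lie a b c
  induction x using TensorProduct.induction_on with
  | zero => simp only [h0z, map_zero]
  | tmul c l =>
      induction y using TensorProduct.induction_on with
      | zero => simp only [hz0, map_zero]
      | tmul d l' =>
          rw [LieAlgebra.ExtendScalars.bracket_tmul, conj_tmul, conj_tmul, conj_tmul,
            LieAlgebra.ExtendScalars.bracket_tmul, map_mul]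
      | add a b ha hb => rw [hza, map_add, map_add, hza, ha, hb]
  | add a b ha hb => rw [haz, map_add, map_add, haz, ha, hb]

lemma nijenhuis_add_left {R L : Type*} [CommRing R] [LieRing L] [Module R L]
    (J : L →ₗ[R] L) (x x' y : L) :
    nijenhuis J (x + x') y = nijenhuis J x y + nijenhuis J x' y := by
  simp only [nijenhuis, map_add, add_lie, lie_add]
  abel

lemma nijenhuis_add_right {R L : Type*} [CommRing R] [LieRing L] [Module R L]
    (J : L →ₗ[R] L) (x y y' : L) :
    nijenhuis J x (y + y') = nijenhuis J x y + nijenhuis J x y' := by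
  simp only [nijenhuis, map_add, add_lie, lie_add]
  abel

end lie


set_option maxHeartbeats 1000000 in
/-- Let `m` be a complex Lie subalgebra of the complexification `g^ℂ` of a
real Lie algebra `g`, with conjugation `σ`, such that `g^ℂ = m ⊕ σ(m)`.  Then the map `J`
defined on `g^ℂ` by `Jx = -ix` for `x ∈ m` and `Jx = ix` for `x ∈ σ(m)` commutes with `σ`,
hence restricts to a real linear map on `g`, satisfies `J² = -Id`, and has vanishing
Nijenhuis tensor on `g`. -/
theorem stmt2 (L : Type*) [LieRing L] [LieAlgebra ℝ L] [FiniteDimensional ℝ L]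
    (m : LieSubalgebra ℂ (ℂ ⊗[ℝ] L))
    (hinf : (m.toSubmodule.restrictScalars ℝ) ⊓
        (m.toSubmodule.restrictScalars ℝ).map (conjugation L) = ⊥)
    (hsup : (m.toSubmodule.restrictScalars ℝ) ⊔
        (m.toSubmodule.restrictScalars ℝ).map (conjugation L) = ⊤)
    (J : (ℂ ⊗[ℝ] L) →ₗ[ℝ] (ℂ ⊗[ℝ] L))
    (hJm : ∀ z ∈ m, J z = -(Complex.I • z))
    (hJσm : ∀ z ∈ (m.toSubmodule.restrictScalars ℝ).map (conjugation L),
        J z = Complex.I • z) :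
    J ∘ₗ conjugation L = conjugation L ∘ₗ J ∧
    (∀ x : L, ∃ y : L, J ((1:ℂ) ⊗ₜ[ℝ] x) = (1:ℂ) ⊗ₜ[ℝ] y) ∧
    J ∘ₗ J = -LinearMap.id ∧
    (∀ x y : L, nijenhuis J ((1:ℂ) ⊗ₜ[ℝ] x) ((1:ℂ) ⊗ₜ[ℝ] y) = 0) := by
  set σ := conjugation L with hσ
  -- decomposition
  have hdec : ∀ x : ℂ ⊗[ℝ] L, ∃ a ∈ m, ∃ w ∈ m, x = a + σ w := by
    intro x
    have hx : x ∈ (m.toSubmodule.restrictScalars ℝ) ⊔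
        (m.toSubmodule.restrictScalars ℝ).map (conjugation L) := by
      rw [hsup]; trivial
    obtain ⟨a, ha, b, hb, rfl⟩ := Submodule.mem_sup.mp hx
    obtain ⟨w, hw, rfl⟩ := Submodule.mem_map.mp hb
    exact ⟨a, ha, w, hw, rfl⟩
  have hmemσ : ∀ w ∈ m, σ w ∈ (m.toSubmodule.restrictScalars ℝ).map (conjugation L) :=
    fun w hw => Submodule.mem_map.mpr ⟨w, hw, rfl⟩
  have hJσ : ∀ w ∈ m, J (σ w) = Complex.I • σ w := fun w hw => hJσm _ (hmemσ w hw)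
  have hII : ∀ x : ℂ ⊗[ℝ] L, Complex.I • Complex.I • x = -x := by
    intro x; rw [smul_smul, Complex.I_mul_I, neg_one_smul]
  -- claim 1
  have h1 : J ∘ₗ σ = σ ∘ₗ J := by
    apply LinearMap.ext
    intro x
    obtain ⟨a, ha, w, hw, rfl⟩ := hdec x
    simp only [LinearMap.comp_apply, map_add]
    rw [conj_conj, hJm a ha, hJσ w hw, hJm w hw, hJσ a ha, map_neg, conj_smul,
      conj_smul, Complex.conj_I, conj_conj, neg_smul, neg_neg, neg_smul]
  -- claim 2
  have h2 : ∀ x : L, ∃ y : L, J ((1:ℂ) ⊗ₜ[ℝ] x) = (1:ℂ) ⊗ₜ[ℝ] y := by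
    intro x
    have hfix : σ ((1:ℂ) ⊗ₜ[ℝ] x) = (1:ℂ) ⊗ₜ[ℝ] x := by
      rw [hσ, conj_tmul, map_one]
    have hfixJ : σ (J ((1:ℂ) ⊗ₜ[ℝ] x)) = J ((1:ℂ) ⊗ₜ[ℝ] x) := by
      have := LinearMap.ext_iff.mp h1 ((1:ℂ) ⊗ₜ[ℝ] x)
      simp only [LinearMap.comp_apply] at this
      rw [← this, hfix]
    have him : imT L (J ((1:ℂ) ⊗ₜ[ℝ] x)) = 0 := by
      have h := imT_conj (J ((1:ℂ) ⊗ₜ[ℝ] x))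
      rw [hσ] at hfixJ
      rw [hfixJ] at h
      have h2 : (2:ℝ) • imT L (J ((1:ℂ) ⊗ₜ[ℝ] x)) = 0 := by
        rw [two_smul]
        nth_rewrite 1 [h]
        abel
      simpa using (smul_eq_zero.mp h2).resolve_left (by norm_num)
    refine ⟨reT L (J ((1:ℂ) ⊗ₜ[ℝ] x)), ?_⟩
    conv_lhs => rw [decompRe (J ((1:ℂ) ⊗ₜ[ℝ] x))]
    rw [him]
    simp
  -- claim 3
  have h3 : J ∘ₗ J = -LinearMap.id := by
    apply LinearMap.ext
    intro x
    obtain ⟨a, ha, w, hw, rfl⟩ := hdec x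
    simp only [LinearMap.comp_apply, LinearMap.neg_apply, LinearMap.id_apply, map_add]
    rw [hJm a ha, hJσ w hw, map_neg, hJm _ (m.smul_mem Complex.I ha)]
    have : Complex.I • σ w = σ ((-Complex.I) • w) := by
      rw [hσ, conj_smul, map_neg, Complex.conj_I, neg_neg]
    rw [this, hJσ _ (m.smul_mem _ hw), ← this, hII, hII, neg_neg]
  -- claim 4
  have hsmulσ : ∀ c : ℂ, ∀ w ∈ m, c • σ w = σ ((starRingEnd ℂ c) • w) := by
    intro c w hw
    rw [hσ, conj_smul, Complex.conj_conj]
  have hsl : ∀ (c : ℂ) (x y : ℂ ⊗[ℝ] L), ⁅c • x, y⁆ = c • ⁅x, y⁆ := fun c x y => smul_lie c x y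
  have hls : ∀ (c : ℂ) (x y : ℂ ⊗[ℝ] L), ⁅x, c • y⁆ = c • ⁅x, y⁆ := fun c x y => lie_smul c x y
  have hnl : ∀ x y : ℂ ⊗[ℝ] L, ⁅-x, y⁆ = -⁅x, y⁆ := fun x y => neg_lie x y
  have hln : ∀ x y : ℂ ⊗[ℝ] L, ⁅x, -y⁆ = -⁅x, y⁆ := fun x y => lie_neg x y
  have key : ∀ u v : ℂ ⊗[ℝ] L, nijenhuis J u v = 0 := by
    have hmm : ∀ a ∈ m, ∀ a' ∈ m, nijenhuis J a a' = 0 := by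
      intro a ha a' ha'
      have hbm : ⁅a, a'⁆ ∈ m := m.lie_mem ha ha'
      show ⁅a, a'⁆ + J ⁅J a, a'⁆ + J ⁅a, J a'⁆ - ⁅J a, J a'⁆ = 0
      rw [hJm a ha, hJm a' ha', hnl, hsl, hln, hls, hnl, hln, hsl, hls, neg_neg,
        map_neg, hJm _ (m.smul_mem Complex.I hbm), hII]
      abel
    have hss : ∀ w ∈ m, ∀ w' ∈ m, nijenhuis J (σ w) (σ w') = 0 := by
      intro w hw w' hw'
      have hbr : ⁅σ w, σ w'⁆ = σ ⁅w, w'⁆ := (conj_lie w w').symm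
      have hbm : ⁅w, w'⁆ ∈ m := m.lie_mem hw hw'
      show ⁅σ w, σ w'⁆ + J ⁅J (σ w), σ w'⁆ + J ⁅σ w, J (σ w')⁆ - ⁅J (σ w), J (σ w')⁆ = 0
      rw [hJσ w hw, hJσ w' hw', hsl, hls, hsl, hls, hbr,
        hsmulσ Complex.I _ hbm, hJσ _ (m.smul_mem _ hbm), ← hsmulσ Complex.I _ hbm, hII]
      abel
    have hms : ∀ a ∈ m, ∀ w ∈ m, nijenhuis J a (σ w) = 0 := by
      intro a ha w hw
      show ⁅a, σ w⁆ + J ⁅J a, σ w⁆ + J ⁅a, J (σ w)⁆ - ⁅J a, J (σ w)⁆ = 0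
      rw [hJm a ha, hJσ w hw, hnl, hsl, hls, hnl, hsl, hls, map_neg, hII, neg_neg]
      abel
    have hsm : ∀ w ∈ m, ∀ a ∈ m, nijenhuis J (σ w) a = 0 := by
      intro w hw a ha
      show ⁅σ w, a⁆ + J ⁅J (σ w), a⁆ + J ⁅σ w, J a⁆ - ⁅J (σ w), J a⁆ = 0
      rw [hJσ w hw, hJm a ha, hsl, hln, hls, hsl, hln, hls, map_neg, smul_neg, hII, neg_neg]
      abel
    intro u v
    obtain ⟨a, ha, w, hw, rfl⟩ := hdec u
    obtain ⟨a', ha', w', hw', rfl⟩ := hdec v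
    rw [nijenhuis_add_left, nijenhuis_add_right, nijenhuis_add_right,
      hmm a ha a' ha', hms a ha w' hw', hsm w hw a' ha', hss w hw w' hw']
    abel
  exact ⟨h1, h2, h3, fun x y => key _ _⟩
end

section
/- The subsets s₊ = {block matrices [[A,0,0],[B,0,w₂],[v₁ᵗ,0,-tr A]]} and s₋ = {block matrices [[0,C,w₁],[0,D,0],[0,v₂ᵗ,-tr D]]} of sl(2n+1,ℝ) (with A,B,C,D ∈ gl(n,ℝ) and v₁,v₂,w₁,w₂ ∈ ℝⁿ) are Lie subalgebras, and sl(2n+1,ℝ) = s₊ ⊕ s₋ as vector spaces. -/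
/-!
Both `s₊` and `s₋` are the traceless matrices that kill one block `U` of coordinate vectors and
preserve `W = U ⊕ ℝ e_last`: for `s₊` the block `U` is spanned by the second copy of `ℝⁿ`, for
`s₋` by the first. Annihilating `U` and (block-triangularly) preserving `W` are both stable under
products, hence under commutators. The decomposition is read off the columns: the first `n`
columns and `w₂` go to `s₊`, the next `n` columns and `w₁` to `s₋`, and the corner entry is split
as `-tr A` plus `-tr D`, which is possible exactly because the trace vanishes.
-/

open Matrix

namespace Stmt7

def sPlusSet (n : ℕ) : Set (Matrix ((Fin n ⊕ Fin n) ⊕ Unit) ((Fin n ⊕ Fin n) ⊕ Unit) ℝ) :=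
  {X | X.trace = 0 ∧ (∀ i (j : Fin n), X i (Sum.inl (Sum.inr j)) = 0) ∧
    (∀ i : Fin n, X (Sum.inl (Sum.inl i)) (Sum.inr ()) = 0)}

def sMinusSet (n : ℕ) : Set (Matrix ((Fin n ⊕ Fin n) ⊕ Unit) ((Fin n ⊕ Fin n) ⊕ Unit) ℝ) :=
  {X | X.trace = 0 ∧ (∀ i (j : Fin n), X i (Sum.inl (Sum.inl j)) = 0) ∧
    (∀ i : Fin n, X (Sum.inl (Sum.inr i)) (Sum.inr ()) = 0)}

section General

variable {ι α R : Type*} [Fintype ι] [LinearOrder α] [CommRing R]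

variable (R) in
/-- For `b : ι → Bool`, `X.BlockTriangular b` says that `X` preserves the span of the coordinate
vectors `e_j` with `b j = false`. -/
def slZeroColsBlockTriangular (K : Set ι) (b : ι → α) : Submodule R (Matrix ι ι R) where
  carrier := {X | X.trace = 0 ∧ (∀ i, ∀ j ∈ K, X i j = 0) ∧ X.BlockTriangular b}
  add_mem' := by
    rintro X Y ⟨hXtr, hXK, hXb⟩ ⟨hYtr, hYK, hYb⟩
    refine ⟨by rw [trace_add, hXtr, hYtr, add_zero], fun i j hj => ?_, hXb.add hYb⟩
    rw [Matrix.add_apply, hXK i j hj, hYK i j hj, add_zero]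
  zero_mem' := ⟨trace_zero ι R, fun _ _ _ => rfl, blockTriangular_zero⟩
  smul_mem' := by
    rintro c X ⟨hXtr, hXK, hXb⟩
    refine ⟨by rw [trace_smul, hXtr, smul_zero], fun i j hj => ?_, fun i j hij => ?_⟩
    · rw [Matrix.smul_apply, hXK i j hj, smul_zero]
    · rw [Matrix.smul_apply, hXb hij, smul_zero]

theorem mul_apply_eq_zero_of_col_eq_zero {M N : Matrix ι ι R} {j : ι} (hN : ∀ k, N k j = 0)
    (i : ι) : (M * N) i j = 0 := by
  simp [mul_apply, hN]

theorem lie_mem_slZeroColsBlockTriangular {K : Set ι} {b : ι → α} {X Y : Matrix ι ι R}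
    (hX : X ∈ slZeroColsBlockTriangular R K b) (hY : Y ∈ slZeroColsBlockTriangular R K b) :
    ⁅X, Y⁆ ∈ slZeroColsBlockTriangular R K b := by
  obtain ⟨-, hXK, hXb⟩ := hX
  obtain ⟨-, hYK, hYb⟩ := hY
  refine ⟨LieAlgebra.matrix_trace_commutator_zero ι R X Y, fun i j hj => ?_, ?_⟩
  · rw [Ring.lie_def, Matrix.sub_apply, mul_apply_eq_zero_of_col_eq_zero (hYK · j hj),
      mul_apply_eq_zero_of_col_eq_zero (hXK · j hj), sub_zero]
  · rw [Ring.lie_def]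
    exact (hXb.mul hYb).sub (hYb.mul hXb)

end General

variable {n : ℕ}

abbrev Idx (n : ℕ) := (Fin n ⊕ Fin n) ⊕ Unit

def plusBlock : Idx n → Bool := Sum.elim (Sum.elim (fun _ => true) fun _ => false) fun _ => false

def minusBlock : Idx n → Bool := Sum.elim (Sum.elim (fun _ => false) fun _ => true) fun _ => false

variable (n) in
def sPlus : Submodule ℝ (Matrix (Idx n) (Idx n) ℝ) :=
  slZeroColsBlockTriangular ℝ (Set.range (Sum.inl ∘ Sum.inr)) plusBlock

variable (n) in
def sMinus : Submodule ℝ (Matrix (Idx n) (Idx n) ℝ) :=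
  slZeroColsBlockTriangular ℝ (Set.range (Sum.inl ∘ Sum.inl)) minusBlock

theorem coe_sPlus : (sPlus n : Set (Matrix (Idx n) (Idx n) ℝ)) = sPlusSet n := by
  ext X
  refine and_congr_right fun _ => ⟨fun ⟨hK, hb⟩ => ⟨fun i j => hK i _ ⟨j, rfl⟩,
    fun _ => hb Bool.false_lt_true⟩, fun ⟨hK, hlast⟩ => ⟨?_, ?_⟩⟩
  · rintro i _ ⟨j, rfl⟩
    exact hK i j
  · rintro ((i | i) | ⟨⟩) ((j | j) | ⟨⟩) hij
    all_goals first | exact hK _ _ | exact hlast _ | cases hij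

theorem coe_sMinus : (sMinus n : Set (Matrix (Idx n) (Idx n) ℝ)) = sMinusSet n := by
  ext X
  refine and_congr_right fun _ => ⟨fun ⟨hK, hb⟩ => ⟨fun i j => hK i _ ⟨j, rfl⟩,
    fun _ => hb Bool.false_lt_true⟩, fun ⟨hK, hlast⟩ => ⟨?_, ?_⟩⟩
  · rintro i _ ⟨j, rfl⟩
    exact hK i j
  · rintro ((i | i) | ⟨⟩) ((j | j) | ⟨⟩) hij
    all_goals first | exact hK _ _ | exact hlast _ | cases hij

theorem mem_sPlus_iff {X : Matrix (Idx n) (Idx n) ℝ} : X ∈ sPlus n ↔ X ∈ sPlusSet n := by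
  rw [← SetLike.mem_coe, coe_sPlus]

theorem mem_sMinus_iff {X : Matrix (Idx n) (Idx n) ℝ} : X ∈ sMinus n ↔ X ∈ sMinusSet n := by
  rw [← SetLike.mem_coe, coe_sMinus]

theorem eq_zero_of_mem_sPlusSet_of_mem_sMinusSet {X : Matrix (Idx n) (Idx n) ℝ}
    (hp : X ∈ sPlusSet n) (hm : X ∈ sMinusSet n) : X = 0 := by
  obtain ⟨htr, hpK, hpLast⟩ := hp
  obtain ⟨-, hmK, hmLast⟩ := hm
  have hcorner : X (Sum.inr ()) (Sum.inr ()) = 0 := by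
    simpa [trace, Fintype.sum_sum_type, hpK, hmK] using htr
  ext i ((j | j) | ⟨⟩)
  · exact hmK i j
  · exact hpK i j
  · rcases i with (i | i) | ⟨⟩
    exacts [hpLast i, hmLast i, hcorner]

/-- The `s₊`-component `[[A,0,0],[B,0,w₂],[v₁ᵗ,0,-tr A]]` of `X`. -/
def plusPart (X : Matrix (Idx n) (Idx n) ℝ) : Matrix (Idx n) (Idx n) ℝ :=
  Matrix.of fun i j =>
    match i, j with
    | i, Sum.inl (Sum.inl k) => X i (Sum.inl (Sum.inl k))
    | _, Sum.inl (Sum.inr _) => 0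
    | Sum.inl (Sum.inl _), Sum.inr _ => 0
    | Sum.inl (Sum.inr k), Sum.inr u => X (Sum.inl (Sum.inr k)) (Sum.inr u)
    | Sum.inr _, Sum.inr _ => -(∑ k : Fin n, X (Sum.inl (Sum.inl k)) (Sum.inl (Sum.inl k)))

theorem trace_plusPart (X : Matrix (Idx n) (Idx n) ℝ) : (plusPart X).trace = 0 := by
  simp [trace, Fintype.sum_sum_type, plusPart]

theorem plusPart_mem_sPlusSet (X : Matrix (Idx n) (Idx n) ℝ) : plusPart X ∈ sPlusSet n :=
  ⟨trace_plusPart X, fun i _ => by rcases i with (i | i) | i <;> rfl, fun _ => rfl⟩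

theorem sub_plusPart_mem_sMinusSet {X : Matrix (Idx n) (Idx n) ℝ} (hX : X.trace = 0) :
    X - plusPart X ∈ sMinusSet n :=
  ⟨by rw [trace_sub, hX, trace_plusPart, sub_zero], fun _ _ => by simp [plusPart],
    fun _ => by simp [plusPart]⟩

theorem sPlus_inf_sMinus : sPlus n ⊓ sMinus n = ⊥ := by
  refine eq_bot_iff.2 fun X ⟨hp, hm⟩ => (Submodule.mem_bot ℝ).2 ?_
  exact eq_zero_of_mem_sPlusSet_of_mem_sMinusSet (mem_sPlus_iff.1 hp) (mem_sMinus_iff.1 hm)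

theorem sPlus_sup_sMinus :
    sPlus n ⊔ sMinus n = LinearMap.ker (Matrix.traceLinearMap (Idx n) ℝ ℝ) := by
  refine le_antisymm (sup_le (fun X hX => hX.1) fun X hX => hX.1) fun X hX => ?_
  exact Submodule.mem_sup.2 ⟨plusPart X, mem_sPlus_iff.2 (plusPart_mem_sPlusSet X),
    X - plusPart X, mem_sMinus_iff.2 (sub_plusPart_mem_sMinusSet hX), add_sub_cancel _ _⟩

/-- The subsets `s₊` and `s₋` of `sl(2n+1,ℝ)` are Lie subalgebras, and
`sl(2n+1,ℝ) = s₊ ⊕ s₋` as vector spaces. -/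
theorem stmt7 (n : ℕ) :
    ∃ Sp Sm : Submodule ℝ
        (Matrix ((Fin n ⊕ Fin n) ⊕ Unit) ((Fin n ⊕ Fin n) ⊕ Unit) ℝ),
      (Sp : Set _) = sPlusSet n ∧ (Sm : Set _) = sMinusSet n ∧
      (∀ x ∈ Sp, ∀ y ∈ Sp, ⁅x, y⁆ ∈ Sp) ∧
      (∀ x ∈ Sm, ∀ y ∈ Sm, ⁅x, y⁆ ∈ Sm) ∧
      Sp ⊓ Sm = ⊥ ∧
      Sp ⊔ Sm = LinearMap.ker
        (Matrix.traceLinearMap ((Fin n ⊕ Fin n) ⊕ Unit) ℝ ℝ) :=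
  ⟨sPlus n, sMinus n, coe_sPlus, coe_sMinus,
    fun _ hx _ hy => lie_mem_slZeroColsBlockTriangular hx hy,
    fun _ hx _ hy => lie_mem_slZeroColsBlockTriangular hx hy,
    sPlus_inf_sMinus, sPlus_sup_sMinus⟩

end Stmt7
end

section
/- Define J on sl(2n+1,ℝ) by J(A,v,w) = (AJ₀, -J₀v, -J₀w) where J₀ = [[0,-I_n],[I_n,0]], using the decomposition sl(2n+1,ℝ) = gl(2n,ℝ) ⊕ a ⊕ b. Then J² = -Id and the Nijenhuis tensor of J vanishes, i.e., J[x,y] = [Jx,y] + [x,Jy] + J[Jx,Jy] for all x,y ∈ sl(2n+1,ℝ). -/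
/-!
In the coordinates `(A, v, w)` the bracket of `sl(m+1)` is again of the form `Phi`, with explicit
components (`lie_Phi`). Hence `J² = -1` and the Nijenhuis identity split into three identities
between matrices and vectors, which are verified by expanding, for an arbitrary `K` with
`K * K = -1` and `Kᵀ = -K` in place of `J₀`.
-/

open Matrix

namespace Stmt8

/-- The identification of `gl(m,ℝ) ⊕ a ⊕ b` with matrices in `sl(m+1,ℝ)`:
`(A, v, w) ↦ [[A, w], [vᵗ, -tr A]]`. -/
def Phi {ι : Type} [Fintype ι] (A : Matrix ι ι ℝ) (v w : ι → ℝ) :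
    Matrix (ι ⊕ Unit) (ι ⊕ Unit) ℝ :=
  Matrix.fromBlocks A (Matrix.of fun i (_ : Unit) => w i)
    (Matrix.of fun (_ : Unit) j => v j) (Matrix.of fun _ _ => -A.trace)

/-- The standard complex structure `J₀ = [[0,-Iₙ],[Iₙ,0]]` on `ℝ^{2n}`. -/
def J0 (n : ℕ) : Matrix (Fin n ⊕ Fin n) (Fin n ⊕ Fin n) ℝ :=
  Matrix.fromBlocks 0 (-1) 1 0

section Bracket

variable {ι : Type} [Fintype ι]

lemma Phi_add (A A' : Matrix ι ι ℝ) (v w v' w' : ι → ℝ) :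
    Phi A v w + Phi A' v' w' = Phi (A + A') (v + v') (w + w') := by
  ext (i | i) (j | j) <;> simp [Phi, fromBlocks, trace_add, add_comm]

lemma Phi_neg (A : Matrix ι ι ℝ) (v w : ι → ℝ) : -Phi A v w = Phi (-A) (-v) (-w) := by
  ext (i | i) (j | j) <;> simp [Phi, fromBlocks]

def glLie (A A' : Matrix ι ι ℝ) (v w v' w' : ι → ℝ) : Matrix ι ι ℝ :=
  A * A' - A' * A + vecMulVec w v' - vecMulVec w' v

def aLie (A A' : Matrix ι ι ℝ) (v v' : ι → ℝ) : ι → ℝ :=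
  A'ᵀ *ᵥ v - Aᵀ *ᵥ v' + A'.trace • v - A.trace • v'

def bLie (A A' : Matrix ι ι ℝ) (w w' : ι → ℝ) : ι → ℝ :=
  A *ᵥ w' - A' *ᵥ w + A.trace • w' - A'.trace • w

lemma trace_glLie (A A' : Matrix ι ι ℝ) (v w v' w' : ι → ℝ) :
    (glLie A A' v w v' w').trace = w ⬝ᵥ v' - w' ⬝ᵥ v := by
  simp [glLie, trace_mul_comm A A']

lemma lie_Phi (A A' : Matrix ι ι ℝ) (v w v' w' : ι → ℝ) :
    ⁅Phi A v w, Phi A' v' w'⁆ =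
      Phi (glLie A A' v w v' w') (aLie A A' v v') (bLie A A' w w') := by
  rw [Ring.lie_def, Phi, Phi, Phi, trace_glLie]
  ext (i | i) (j | j) <;>
    simp [fromBlocks, mul_apply, glLie, aLie, bLie, mulVec, dotProduct,
      vecMulVec_apply, Fintype.sum_sum_type, mul_comm] <;> ring

end Bracket

section ComplexStructure

variable {ι : Type} [Fintype ι] [DecidableEq ι] {K : Matrix ι ι ℝ}

lemma Phi_mul_mul_of_mul_self_eq_neg_one (hK : K * K = -1) (A : Matrix ι ι ℝ) (v w : ι → ℝ) :
    Phi (A * K * K) (-(K *ᵥ -(K *ᵥ v))) (-(K *ᵥ -(K *ᵥ w))) = -Phi A v w := by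
  simp only [Phi_neg, mul_assoc, hK, mul_neg, mul_one, mulVec_neg, neg_neg, mulVec_mulVec,
    neg_mulVec, one_mulVec]

lemma glLie_nijenhuis (hT : Kᵀ = -K) (hK : K * K = -1) (A A' : Matrix ι ι ℝ)
    (v w v' w' : ι → ℝ) :
    glLie A A' v w v' w' * K =
      glLie (A * K) A' (-(K *ᵥ v)) (-(K *ᵥ w)) v' w' +
        glLie A (A' * K) v w (-(K *ᵥ v')) (-(K *ᵥ w')) +
        glLie (A * K) (A' * K) (-(K *ᵥ v)) (-(K *ᵥ w)) (-(K *ᵥ v')) (-(K *ᵥ w')) * K := by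
  have vecMulVec_mulVec_right (x y : ι → ℝ) : vecMulVec x (K *ᵥ y) = -(vecMulVec x y * K) := by
    rw [vecMulVec_mul, ← vecMulVec_neg, ← vecMul_neg, ← hT, vecMul_transpose]
  simp only [glLie, neg_vecMulVec, vecMulVec_neg, ← mul_vecMulVec, vecMulVec_mulVec_right,
    sub_mul, add_mul, mul_neg, neg_mul, neg_neg, mul_assoc, hK, mul_one]
  abel

lemma aLie_nijenhuis (hT : Kᵀ = -K) (hK : K * K = -1) (A A' : Matrix ι ι ℝ) (v v' : ι → ℝ) :
    -(K *ᵥ aLie A A' v v') =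
      aLie (A * K) A' (-(K *ᵥ v)) v' + aLie A (A' * K) v (-(K *ᵥ v')) +
        -(K *ᵥ aLie (A * K) (A' * K) (-(K *ᵥ v)) (-(K *ᵥ v'))) := by
  have hK' (B : Matrix ι ι ℝ) : K * (K * B) = -B := by rw [← mul_assoc, hK, neg_one_mul]
  simp only [aLie, transpose_mul, hT, mulVec_add, mulVec_sub, mulVec_neg, mulVec_smul,
    mulVec_mulVec, neg_mulVec, neg_mul, neg_neg, mul_assoc, hK, hK', smul_neg, one_mulVec]
  module

lemma bLie_nijenhuis (hK : K * K = -1) (A A' : Matrix ι ι ℝ) (w w' : ι → ℝ) :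
    -(K *ᵥ bLie A A' w w') =
      bLie (A * K) A' (-(K *ᵥ w)) w' + bLie A (A' * K) w (-(K *ᵥ w')) +
        -(K *ᵥ bLie (A * K) (A' * K) (-(K *ᵥ w)) (-(K *ᵥ w'))) := by
  simp only [bLie, mulVec_add, mulVec_sub, mulVec_neg, mulVec_smul, mulVec_mulVec, neg_mulVec,
    mul_neg, neg_neg, mul_assoc, hK, smul_neg, one_mulVec, mul_one]
  module

end ComplexStructure

lemma J0_transpose (n : ℕ) : (J0 n)ᵀ = -J0 n := by
  ext (i | i) (j | j) <;> simp [J0, fromBlocks, one_apply, eq_comm]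

lemma J0_mul_self (n : ℕ) : J0 n * J0 n = -1 := by
  rw [J0, fromBlocks_multiply, ← fromBlocks_one, fromBlocks_neg]
  simp

/-- The map `J(A,v,w) = (AJ₀, -J₀v, -J₀w)` on
`sl(2n+1,ℝ) = gl(2n,ℝ) ⊕ a ⊕ b` satisfies `J² = -Id`, and its Nijenhuis tensor vanishes:
`J[x,y] = [Jx,y] + [x,Jy] + J[Jx,Jy]` for all `x, y ∈ sl(2n+1,ℝ)`. -/
theorem stmt8 (n : ℕ)
    (J : Matrix ((Fin n ⊕ Fin n) ⊕ Unit) ((Fin n ⊕ Fin n) ⊕ Unit) ℝ →ₗ[ℝ]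
      Matrix ((Fin n ⊕ Fin n) ⊕ Unit) ((Fin n ⊕ Fin n) ⊕ Unit) ℝ)
    (hJ : ∀ (A : Matrix (Fin n ⊕ Fin n) (Fin n ⊕ Fin n) ℝ) (v w : Fin n ⊕ Fin n → ℝ),
      J (Phi A v w) = Phi (A * J0 n) (-(J0 n *ᵥ v)) (-(J0 n *ᵥ w))) :
    (∀ (A : Matrix (Fin n ⊕ Fin n) (Fin n ⊕ Fin n) ℝ) (v w : Fin n ⊕ Fin n → ℝ),
      J (J (Phi A v w)) = -(Phi A v w)) ∧
    (∀ (A A' : Matrix (Fin n ⊕ Fin n) (Fin n ⊕ Fin n) ℝ)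
        (v w v' w' : Fin n ⊕ Fin n → ℝ),
      J ⁅Phi A v w, Phi A' v' w'⁆ =
        ⁅J (Phi A v w), Phi A' v' w'⁆ + ⁅Phi A v w, J (Phi A' v' w')⁆ +
          J ⁅J (Phi A v w), J (Phi A' v' w')⁆) := by
  refine ⟨fun A v w => ?_, fun A A' v w v' w' => ?_⟩
  · rw [hJ, hJ, Phi_mul_mul_of_mul_self_eq_neg_one (J0_mul_self n)]
  · simp only [hJ, lie_Phi, Phi_add]
    rw [glLie_nijenhuis (J0_transpose n) (J0_mul_self n),
      aLie_nijenhuis (J0_transpose n) (J0_mul_self n), bLie_nijenhuis (J0_mul_self n)]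

end Stmt8
end

section
/- Define J(A,v,w) = (AJ₀, -J₀v, -J₀w) and E(A,v,w) = (AE₀, E₀v, -E₀w) on sl(2n+1,ℝ), with J₀ = [[0,-I_n],[I_n,0]] and E₀ = [[I_n,0],[0,-I_n]]. Then {J,E} is a complex product structure: J² = -Id, E² = Id, JE = -EJ, J is integrable, and the ±1-eigenspaces of E are Lie subalgebras of sl(2n+1,ℝ). -/
/-!
Everything is computed in the coordinates `(A, v, w)`, in which the bracket has an explicit
formula, so each claim becomes an identity between matrices and vectors that only uses
`J₀² = -1`, `J₀ᵀ = -J₀`, `E₀² = 1`, `E₀ᵀ = E₀` and `E₀J₀ = -J₀E₀`. For the eigenspaces of `E`,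
the point is that `A E₀ = εA` and `E₀w' = -εw'` force `A w' = 0`, which kills the only terms of
the bracket that could leave the eigenspace.
-/

open Matrix

namespace Stmt9

/-- The identification of `gl(m,ℝ) ⊕ a ⊕ b` with matrices in `sl(m+1,ℝ)`:
`(A, v, w) ↦ [[A, w], [vᵗ, -tr A]]`. -/
def Phi {ι : Type} [Fintype ι] (A : Matrix ι ι ℝ) (v w : ι → ℝ) :
    Matrix (ι ⊕ Unit) (ι ⊕ Unit) ℝ :=
  Matrix.fromBlocks A (Matrix.of fun i (_ : Unit) => w i)
    (Matrix.of fun (_ : Unit) j => v j) (Matrix.of fun _ _ => -A.trace)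

/-- `J₀ = [[0,-Iₙ],[Iₙ,0]]`. -/
def J0 (n : ℕ) : Matrix (Fin n ⊕ Fin n) (Fin n ⊕ Fin n) ℝ :=
  Matrix.fromBlocks 0 (-1) 1 0

/-- `E₀ = [[Iₙ,0],[0,-Iₙ]]`. -/
def E0 (n : ℕ) : Matrix (Fin n ⊕ Fin n) (Fin n ⊕ Fin n) ℝ :=
  Matrix.fromBlocks 1 0 0 (-1)

section Phi

variable {ι : Type} [Fintype ι]

theorem Phi_inj {A A' : Matrix ι ι ℝ} {v w v' w' : ι → ℝ} :
    Phi A v w = Phi A' v' w' ↔ A = A' ∧ v = v' ∧ w = w' := by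
  refine ⟨fun h => ⟨?_, ?_, ?_⟩, fun ⟨hA, hv, hw⟩ => hA ▸ hv ▸ hw ▸ rfl⟩
  · ext i j; simpa [Phi] using congrFun (congrFun h (Sum.inl i)) (Sum.inl j)
  · ext j; simpa [Phi] using congrFun (congrFun h (Sum.inr ())) (Sum.inl j)
  · ext i; simpa [Phi] using congrFun (congrFun h (Sum.inl i)) (Sum.inr ())

theorem Phi_neg (A : Matrix ι ι ℝ) (v w : ι → ℝ) : Phi (-A) (-v) (-w) = -Phi A v w := by
  ext (i|i) (j|j) <;> simp [Phi]

theorem Phi_add (A A' : Matrix ι ι ℝ) (v w v' w' : ι → ℝ) :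
    Phi (A + A') (v + v') (w + w') = Phi A v w + Phi A' v' w' := by
  ext (i|i) (j|j) <;> simp [Phi, trace_add, add_comm]

theorem Phi_smul (c : ℝ) (A : Matrix ι ι ℝ) (v w : ι → ℝ) :
    Phi (c • A) (c • v) (c • w) = c • Phi A v w := by
  ext (i|i) (j|j) <;> simp [Phi, trace_smul]

theorem lie_Phi (A A' : Matrix ι ι ℝ) (v w v' w' : ι → ℝ) :
    ⁅Phi A v w, Phi A' v' w'⁆ =
      Phi (A * A' - A' * A + vecMulVec w v' - vecMulVec w' v)
        (A'ᵀ *ᵥ v - Aᵀ *ᵥ v' + A'.trace • v - A.trace • v')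
        (A *ᵥ w' - A' *ᵥ w + A.trace • w' - A'.trace • w) := by
  ext (i|i) (j|j) <;>
    simp [Ring.lie_def, Phi, mul_apply, Fintype.sum_sum_type, vecMulVec_apply, mulVec,
      dotProduct, trace_sub, trace_add, trace_mul_comm A' A, trace_vecMulVec] <;>
    simp only [mul_comm] <;> ring

end Phi

section StructureMaps

variable {ι : Type} [Fintype ι] {j e : Matrix ι ι ℝ}
  {J E : Matrix (ι ⊕ Unit) (ι ⊕ Unit) ℝ → Matrix (ι ⊕ Unit) (ι ⊕ Unit) ℝ}

theorem J_sq_Phi [DecidableEq ι]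
    (hJ : ∀ A v w, J (Phi A v w) = Phi (A * j) (-(j *ᵥ v)) (-(j *ᵥ w)))
    (hj : j * j = -1) (A : Matrix ι ι ℝ) (v w : ι → ℝ) : J (J (Phi A v w)) = -Phi A v w := by
  simp [hJ, ← Phi_neg, mul_assoc, hj, mulVec_neg, mulVec_mulVec, neg_mulVec]

theorem E_sq_Phi [DecidableEq ι]
    (hE : ∀ A v w, E (Phi A v w) = Phi (A * e) (e *ᵥ v) (-(e *ᵥ w)))
    (he : e * e = 1) (A : Matrix ι ι ℝ) (v w : ι → ℝ) : E (E (Phi A v w)) = Phi A v w := by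
  simp [hE, mul_assoc, he, mulVec_neg, mulVec_mulVec]

theorem J_E_Phi_anticomm
    (hJ : ∀ A v w, J (Phi A v w) = Phi (A * j) (-(j *ᵥ v)) (-(j *ᵥ w)))
    (hE : ∀ A v w, E (Phi A v w) = Phi (A * e) (e *ᵥ v) (-(e *ᵥ w)))
    (hej : e * j = -(j * e)) (A : Matrix ι ι ℝ) (v w : ι → ℝ) :
    J (E (Phi A v w)) = -E (J (Phi A v w)) := by
  simp [hJ, hE, ← Phi_neg, mul_assoc, hej, mulVec_mulVec, mulVec_neg, neg_mulVec]

theorem nijenhuis_Phi [DecidableEq ι]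
    (hJ : ∀ A v w, J (Phi A v w) = Phi (A * j) (-(j *ᵥ v)) (-(j *ᵥ w)))
    (hj : j * j = -1) (hjT : jᵀ = -j) (A A' : Matrix ι ι ℝ) (v w v' w' : ι → ℝ) :
    J ⁅Phi A v w, Phi A' v' w'⁆ =
      ⁅J (Phi A v w), Phi A' v' w'⁆ + ⁅Phi A v w, J (Phi A' v' w')⁆ +
        J ⁅J (Phi A v w), J (Phi A' v' w')⁆ := by
  simp only [lie_Phi, hJ]
  rw [← Phi_add, ← Phi_add, Phi_inj]
  have hjj (M : Matrix ι ι ℝ) : j * (j * M) = -M := by rw [← mul_assoc, hj, neg_one_mul]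
  have hjjv (x : ι → ℝ) : j *ᵥ (j *ᵥ x) = -x := by rw [mulVec_mulVec, hj, neg_mulVec, one_mulVec]
  refine ⟨?_, ?_, ?_⟩
  · simp only [sub_mul, add_mul, mul_assoc, hj, mul_neg, mul_one, vecMulVec_mul,
      ← mulVec_transpose, hjT, neg_mulVec, hjjv, neg_neg, neg_vecMulVec, vecMulVec_neg]
    abel
  · simp only [transpose_mul, hjT, mulVec_sub, mulVec_add, mulVec_smul, mulVec_mulVec,
      neg_mulVec, mulVec_neg, neg_mul, neg_neg, smul_neg, neg_sub, mul_assoc, hj, hjj,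
      one_mulVec]
    abel
  · simp only [mulVec_sub, mulVec_add, mulVec_smul, mulVec_mulVec, neg_mulVec, mulVec_neg,
      mul_neg, neg_neg, smul_neg, neg_sub, mul_assoc, hj, mul_one, one_mulVec]
    abel

theorem mulVec_eq_zero_of_opposite_eigen {A e : Matrix ι ι ℝ} {x : ι → ℝ} {ε : ℝ} (hε : ε ≠ 0)
    (hA : A * e = ε • A) (hx : e *ᵥ x = -(ε • x)) : A *ᵥ x = 0 := by
  have h : ε • (A *ᵥ x) = -(ε • (A *ᵥ x)) :=
    calc ε • (A *ᵥ x) = (A * e) *ᵥ x := by rw [hA, smul_mulVec]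
      _ = -(ε • (A *ᵥ x)) := by rw [← mulVec_mulVec, hx, mulVec_neg, mulVec_smul]
  exact (smul_eq_zero.mp (self_eq_neg.mp h)).resolve_left hε

theorem E_lie_Phi_of_eigen
    (hE : ∀ A v w, E (Phi A v w) = Phi (A * e) (e *ᵥ v) (-(e *ᵥ w)))
    (heT : eᵀ = e) {ε : ℝ} (hε : ε ≠ 0) {A A' : Matrix ι ι ℝ} {v w v' w' : ι → ℝ}
    (h : E (Phi A v w) = ε • Phi A v w) (h' : E (Phi A' v' w') = ε • Phi A' v' w') :
    E ⁅Phi A v w, Phi A' v' w'⁆ = ε • ⁅Phi A v w, Phi A' v' w'⁆ := by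
  rw [hE, ← Phi_smul, Phi_inj] at h h'
  obtain ⟨hA, hv, hw⟩ := h
  obtain ⟨hA', hv', hw'⟩ := h'
  rw [neg_eq_iff_eq_neg] at hw hw'
  have hAT : e * Aᵀ = ε • Aᵀ := by rw [← heT, ← transpose_mul, hA, transpose_smul]
  have hAT' : e * A'ᵀ = ε • A'ᵀ := by rw [← heT, ← transpose_mul, hA', transpose_smul]
  have hAw' := mulVec_eq_zero_of_opposite_eigen hε hA hw'
  have hA'w := mulVec_eq_zero_of_opposite_eigen hε hA' hw
  rw [lie_Phi, hE, ← Phi_smul, Phi_inj]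
  refine ⟨?_, ?_, ?_⟩
  · simp only [sub_mul, add_mul, mul_assoc, hA, hA', vecMulVec_mul, ← mulVec_transpose, heT,
      hv, hv', mul_smul_comm, vecMulVec_smul]
    module
  · simp only [mulVec_sub, mulVec_add, mulVec_smul, mulVec_mulVec, hAT, hAT', hv, hv',
      smul_mulVec]
    module
  · simp only [hAw', hA'w, mulVec_sub, mulVec_add, mulVec_smul, hw, hw']
    module

end StructureMaps

section Standard

variable {n : ℕ}

theorem J0_mul_self : J0 n * J0 n = -1 := by
  simp [J0, fromBlocks_multiply, ← fromBlocks_one, fromBlocks_neg]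

theorem E0_mul_self : E0 n * E0 n = 1 := by
  simp [E0, fromBlocks_multiply, ← fromBlocks_one]

theorem E0_mul_J0 : E0 n * J0 n = -(J0 n * E0 n) := by
  simp [E0, J0, fromBlocks_multiply, fromBlocks_neg]

theorem J0_transpose : (J0 n)ᵀ = -J0 n := by
  simp [J0, fromBlocks_transpose, fromBlocks_neg]

theorem E0_transpose : (E0 n)ᵀ = E0 n := by
  simp [E0, fromBlocks_transpose]

end Standard

/-- The maps `J(A,v,w) = (AJ₀, -J₀v, -J₀w)` and `E(A,v,w) = (AE₀, E₀v, -E₀w)`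
on `sl(2n+1,ℝ)` form a complex product structure: `J² = -Id`, `E² = Id`, `JE = -EJ`,
`J` is integrable, and the `±1`-eigenspaces of `E` are Lie subalgebras. -/
theorem stmt9 (n : ℕ)
    (J E : Matrix ((Fin n ⊕ Fin n) ⊕ Unit) ((Fin n ⊕ Fin n) ⊕ Unit) ℝ →ₗ[ℝ]
      Matrix ((Fin n ⊕ Fin n) ⊕ Unit) ((Fin n ⊕ Fin n) ⊕ Unit) ℝ)
    (hJ : ∀ (A : Matrix (Fin n ⊕ Fin n) (Fin n ⊕ Fin n) ℝ) (v w : Fin n ⊕ Fin n → ℝ),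
      J (Phi A v w) = Phi (A * J0 n) (-(J0 n *ᵥ v)) (-(J0 n *ᵥ w)))
    (hE : ∀ (A : Matrix (Fin n ⊕ Fin n) (Fin n ⊕ Fin n) ℝ) (v w : Fin n ⊕ Fin n → ℝ),
      E (Phi A v w) = Phi (A * E0 n) (E0 n *ᵥ v) (-(E0 n *ᵥ w))) :
    (∀ (A : Matrix (Fin n ⊕ Fin n) (Fin n ⊕ Fin n) ℝ) (v w : Fin n ⊕ Fin n → ℝ),
      J (J (Phi A v w)) = -(Phi A v w)) ∧
    (∀ (A : Matrix (Fin n ⊕ Fin n) (Fin n ⊕ Fin n) ℝ) (v w : Fin n ⊕ Fin n → ℝ),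
      E (E (Phi A v w)) = Phi A v w) ∧
    (∀ (A : Matrix (Fin n ⊕ Fin n) (Fin n ⊕ Fin n) ℝ) (v w : Fin n ⊕ Fin n → ℝ),
      J (E (Phi A v w)) = -(E (J (Phi A v w)))) ∧
    (∀ (A A' : Matrix (Fin n ⊕ Fin n) (Fin n ⊕ Fin n) ℝ)
        (v w v' w' : Fin n ⊕ Fin n → ℝ),
      J ⁅Phi A v w, Phi A' v' w'⁆ =
        ⁅J (Phi A v w), Phi A' v' w'⁆ + ⁅Phi A v w, J (Phi A' v' w')⁆ +
          J ⁅J (Phi A v w), J (Phi A' v' w')⁆) ∧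
    (∀ (A A' : Matrix (Fin n ⊕ Fin n) (Fin n ⊕ Fin n) ℝ)
        (v w v' w' : Fin n ⊕ Fin n → ℝ),
      E (Phi A v w) = Phi A v w → E (Phi A' v' w') = Phi A' v' w' →
        E ⁅Phi A v w, Phi A' v' w'⁆ = ⁅Phi A v w, Phi A' v' w'⁆) ∧
    (∀ (A A' : Matrix (Fin n ⊕ Fin n) (Fin n ⊕ Fin n) ℝ)
        (v w v' w' : Fin n ⊕ Fin n → ℝ),
      E (Phi A v w) = -(Phi A v w) → E (Phi A' v' w') = -(Phi A' v' w') →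
        E ⁅Phi A v w, Phi A' v' w'⁆ = -⁅Phi A v w, Phi A' v' w'⁆) := by
  refine ⟨J_sq_Phi hJ J0_mul_self, E_sq_Phi hE E0_mul_self,
    J_E_Phi_anticomm hJ hE E0_mul_J0, nijenhuis_Phi hJ J0_mul_self J0_transpose, ?_, ?_⟩
  · intro A A' v w v' w' h h'
    simpa using
      E_lie_Phi_of_eigen hE E0_transpose one_ne_zero (by rwa [one_smul]) (by rwa [one_smul])
  · intro A A' v w v' w' h h'
    simpa using E_lie_Phi_of_eigen hE E0_transpose (neg_ne_zero.mpr one_ne_zero)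
      (by rwa [neg_one_smul]) (by rwa [neg_one_smul])

end Stmt9
end

section
/- If g is a real Lie algebra with complex product structure {J,E} (g = g₊ ⊕ g₋, Jg₊ = g₋), then the real Lie algebra underlying g^ℂ carries a hypercomplex structure {J₁, J₂, J₃ = J₁J₂} with J₁(x+iy) = Jx + iJy, and J₂(x+iy) = i(x+iy) for x,y ∈ g₊, J₂(x+iy) = -i(x+iy) for x,y ∈ g₋; that is, J₁² = J₂² = -Id, J₁J₂ = -J₂J₁, and J₁, J₂, J₁J₂ are all integrable. -/
open TensorProduct

section auxiliary

variable {L : Type*} [LieRing L] [LieAlgebra ℝ L]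

/-- Eigenspace decomposition for an involution `E`. -/
lemma stmt10.decomp_aux (E : L →ₗ[ℝ] L) (hEE : ∀ z, E (E z) = z) (z : L) :
    ∃ p m : L, E p = p ∧ E m = -m ∧ z = p + m := by
  refine ⟨(2⁻¹ : ℝ) • (z + E z), (2⁻¹ : ℝ) • (z - E z), ?_, ?_, ?_⟩
  · rw [map_smul, map_add, hEE]; module
  · rw [map_smul, map_sub, hEE]; module
  · module

/-- The product structure `E` is integrable (vanishing "Nijenhuis tensor" of `E`). -/
lemma stmt10.NE_aux (E : L →ₗ[ℝ] L) (hEE : ∀ z, E (E z) = z)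
    (hplus : ∀ x y : L, E x = x → E y = y → E ⁅x, y⁆ = ⁅x, y⁆)
    (hminus : ∀ x y : L, E x = -x → E y = -y → E ⁅x, y⁆ = -⁅x, y⁆)
    (x y : L) :
    ⁅x, y⁆ + ⁅E x, E y⁆ - E ⁅E x, y⁆ - E ⁅x, E y⁆ = 0 := by
  have key : ∀ x y : L, (E x = x ∨ E x = -x) → (E y = y ∨ E y = -y) →
      ⁅x, y⁆ + ⁅E x, E y⁆ - E ⁅E x, y⁆ - E ⁅x, E y⁆ = 0 := by
    rintro x y (hx | hx) (hy | hy)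
    · rw [hx, hy, hplus x y hx hy]; abel
    · rw [hx, hy]; simp only [lie_neg, map_neg]; abel
    · rw [hx, hy]; simp only [neg_lie, map_neg]; abel
    · rw [hx, hy]; simp only [neg_lie, lie_neg, map_neg, neg_neg, hminus x y hx hy]; abel
  have addl : ∀ x1 x2 y : L,
      ⁅x1 + x2, y⁆ + ⁅E (x1 + x2), E y⁆ - E ⁅E (x1 + x2), y⁆ - E ⁅x1 + x2, E y⁆ =
      (⁅x1, y⁆ + ⁅E x1, E y⁆ - E ⁅E x1, y⁆ - E ⁅x1, E y⁆)
      + (⁅x2, y⁆ + ⁅E x2, E y⁆ - E ⁅E x2, y⁆ - E ⁅x2, E y⁆) := by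
    intros; simp only [map_add, add_lie, lie_add]; abel
  have addr : ∀ x y1 y2 : L,
      ⁅x, y1 + y2⁆ + ⁅E x, E (y1 + y2)⁆ - E ⁅E x, y1 + y2⁆ - E ⁅x, E (y1 + y2)⁆ =
      (⁅x, y1⁆ + ⁅E x, E y1⁆ - E ⁅E x, y1⁆ - E ⁅x, E y1⁆)
      + (⁅x, y2⁆ + ⁅E x, E y2⁆ - E ⁅E x, y2⁆ - E ⁅x, E y2⁆) := by
    intros; simp only [map_add, add_lie, lie_add]; abel
  obtain ⟨xp, xm, hxp, hxm, hx⟩ := stmt10.decomp_aux E hEE x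
  obtain ⟨yp, ym, hyp, hym, hy⟩ := stmt10.decomp_aux E hEE y
  rw [hx, hy, addl, addr, addr,
    key xp yp (Or.inl hxp) (Or.inl hyp), key xp ym (Or.inl hxp) (Or.inr hym),
    key xm yp (Or.inr hxm) (Or.inl hyp), key xm ym (Or.inr hxm) (Or.inr hym)]
  simp

/-- The product structure `K = J ∘ E` is integrable. -/
lemma stmt10.NK_aux (J E : L →ₗ[ℝ] L)
    (hJJ : ∀ z, J (J z) = -z) (hEE : ∀ z, E (E z) = z)
    (hEJ : ∀ z, E (J z) = -J (E z))
    (hJint : ∀ x y : L, nijenhuis J x y = 0)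
    (hplus : ∀ x y : L, E x = x → E y = y → E ⁅x, y⁆ = ⁅x, y⁆)
    (hminus : ∀ x y : L, E x = -x → E y = -y → E ⁅x, y⁆ = -⁅x, y⁆)
    (x y : L) :
    ⁅x, y⁆ + ⁅J (E x), J (E y)⁆ - J (E ⁅J (E x), y⁆) - J (E ⁅x, J (E y)⁆) = 0 := by
  have key : ∀ x y : L, (E x = x ∨ E x = -x) → (E y = y ∨ E y = -y) →
      ⁅x, y⁆ + ⁅J (E x), J (E y)⁆ - J (E ⁅J (E x), y⁆) - J (E ⁅x, J (E y)⁆) = 0 := by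
    intro x y hx' hy'
    have hN : ⁅x, y⁆ + J ⁅J x, y⁆ + J ⁅x, J y⁆ - ⁅J x, J y⁆ = 0 := hJint x y
    rcases hx' with hx | hx <;> rcases hy' with hy | hy
    · have hEJx : E (J x) = -(J x) := by rw [hEJ, hx]
      have hEJy : E (J y) = -(J y) := by rw [hEJ, hy]
      have hA : E ⁅x, y⁆ = ⁅x, y⁆ := hplus x y hx hy
      have hB : E ⁅J x, J y⁆ = -⁅J x, J y⁆ := hminus _ _ hEJx hEJy
      rw [hx, hy]
      have h2 := congrArg J hN
      simp only [map_add, map_sub, map_zero, hJJ] at h2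
      have h3 := congrArg E h2
      simp only [map_add, map_sub, map_neg, map_zero, hEJ, hA, hB, neg_neg] at h3
      have h4 := congrArg J h3
      simp only [map_add, map_sub, map_neg, map_zero, hJJ, neg_neg] at h4
      rw [← h4]; abel
    · have hEJx : E (J x) = -(J x) := by rw [hEJ, hx]
      have hEJy : E (J y) = J y := by rw [hEJ, hy, map_neg, neg_neg]
      have hP : E ⁅J x, y⁆ = -⁅J x, y⁆ := hminus _ _ hEJx hy
      have hQ : E ⁅x, J y⁆ = ⁅x, J y⁆ := hplus _ _ hx hEJy
      rw [hx, hy]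
      simp only [map_neg, lie_neg, neg_lie, neg_neg, hP, hQ]
      rw [← hN]; abel
    · have hEJx : E (J x) = J x := by rw [hEJ, hx, map_neg, neg_neg]
      have hEJy : E (J y) = -(J y) := by rw [hEJ, hy]
      have hP : E ⁅J x, y⁆ = ⁅J x, y⁆ := hplus _ _ hEJx hy
      have hQ : E ⁅x, J y⁆ = -⁅x, J y⁆ := hminus _ _ hx hEJy
      rw [hx, hy]
      simp only [map_neg, lie_neg, neg_lie, neg_neg, hP, hQ]
      rw [← hN]; abel
    · have hEJx : E (J x) = J x := by rw [hEJ, hx, map_neg, neg_neg]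
      have hEJy : E (J y) = J y := by rw [hEJ, hy, map_neg, neg_neg]
      have hA : E ⁅x, y⁆ = -⁅x, y⁆ := hminus x y hx hy
      have hB : E ⁅J x, J y⁆ = ⁅J x, J y⁆ := hplus _ _ hEJx hEJy
      rw [hx, hy]
      simp only [map_neg, lie_neg, neg_lie, neg_neg]
      have h2 := congrArg J hN
      simp only [map_add, map_sub, map_zero, hJJ] at h2
      have h3 := congrArg E h2
      simp only [map_add, map_sub, map_neg, map_zero, hEJ, hA, hB, neg_neg] at h3
      have h4 := congrArg J h3
      simp only [map_add, map_sub, map_neg, map_zero, hJJ, neg_neg] at h4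
      rw [← neg_eq_zero] at h4
      rw [← h4]; abel
  have addl : ∀ x1 x2 y : L,
      ⁅x1 + x2, y⁆ + ⁅J (E (x1 + x2)), J (E y)⁆ - J (E ⁅J (E (x1 + x2)), y⁆)
        - J (E ⁅x1 + x2, J (E y)⁆) =
      (⁅x1, y⁆ + ⁅J (E x1), J (E y)⁆ - J (E ⁅J (E x1), y⁆) - J (E ⁅x1, J (E y)⁆))
      + (⁅x2, y⁆ + ⁅J (E x2), J (E y)⁆ - J (E ⁅J (E x2), y⁆) - J (E ⁅x2, J (E y)⁆)) := by
    intros; simp only [map_add, add_lie, lie_add]; abel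
  have addr : ∀ x y1 y2 : L,
      ⁅x, y1 + y2⁆ + ⁅J (E x), J (E (y1 + y2))⁆ - J (E ⁅J (E x), y1 + y2⁆)
        - J (E ⁅x, J (E (y1 + y2))⁆) =
      (⁅x, y1⁆ + ⁅J (E x), J (E y1)⁆ - J (E ⁅J (E x), y1⁆) - J (E ⁅x, J (E y1)⁆))
      + (⁅x, y2⁆ + ⁅J (E x), J (E y2)⁆ - J (E ⁅J (E x), y2⁆) - J (E ⁅x, J (E y2)⁆)) := by
    intros; simp only [map_add, add_lie, lie_add]; abel
  obtain ⟨xp, xm, hxp, hxm, hx⟩ := stmt10.decomp_aux E hEE x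
  obtain ⟨yp, ym, hyp, hym, hy⟩ := stmt10.decomp_aux E hEE y
  rw [hx, hy, addl, addr, addr,
    key xp yp (Or.inl hxp) (Or.inl hyp), key xp ym (Or.inl hxp) (Or.inr hym),
    key xm yp (Or.inr hxm) (Or.inl hyp), key xm ym (Or.inr hxm) (Or.inr hym)]
  simp

lemma stmt10.nij_add_left {R M : Type*} [CommRing R] [LieRing M] [Module R M]
    (J : M →ₗ[R] M) (x1 x2 y : M) :
    nijenhuis J (x1 + x2) y = nijenhuis J x1 y + nijenhuis J x2 y := by
  simp only [nijenhuis, map_add, add_lie, lie_add]; abel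

lemma stmt10.nij_add_right {R M : Type*} [CommRing R] [LieRing M] [Module R M]
    (J : M →ₗ[R] M) (x y1 y2 : M) :
    nijenhuis J x (y1 + y2) = nijenhuis J x y1 + nijenhuis J x y2 := by
  simp only [nijenhuis, map_add, add_lie, lie_add]; abel

/-- To show vanishing of the Nijenhuis tensor on `ℂ ⊗ L` it suffices to check it on
pure tensors. -/
lemma stmt10.nij_tmul_reduce (Jc : (ℂ ⊗[ℝ] L) →ₗ[ℝ] (ℂ ⊗[ℝ] L))
    (h : ∀ (a b : ℂ) (x y : L), nijenhuis Jc (a ⊗ₜ[ℝ] x) (b ⊗ₜ[ℝ] y) = 0) :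
    ∀ u v : ℂ ⊗[ℝ] L, nijenhuis Jc u v = 0 := by
  intro u v
  induction u using TensorProduct.induction_on with
  | zero => simp [nijenhuis]
  | tmul a x =>
    induction v using TensorProduct.induction_on with
    | zero => simp [nijenhuis]
    | tmul b y => exact h a b x y
    | add v1 v2 h1 h2 => rw [stmt10.nij_add_right, h1, h2, add_zero]
  | add u1 u2 h1 h2 => rw [stmt10.nij_add_left, h1, h2, add_zero]

end auxiliary

/-- If `g` is a real Lie algebra with a complex product structure `{J,E}`
(`g = g₊ ⊕ g₋`, `Jg₊ = g₋`), then the real Lie algebra underlying `g^ℂ` carries a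
hypercomplex structure `{J₁, J₂, J₃ = J₁J₂}` with `J₁(x+iy) = Jx + iJy` and
`J₂ = ±i` on `(g₊)^ℂ` resp. `(g₋)^ℂ`: one has `J₁² = J₂² = -Id`, `J₁J₂ = -J₂J₁`, and
`J₁, J₂, J₁J₂` are all integrable. -/
theorem stmt10 (L : Type*) [LieRing L] [LieAlgebra ℝ L]
    (J E : L →ₗ[ℝ] L)
    (hJsq : J ∘ₗ J = -LinearMap.id) (hEsq : E ∘ₗ E = LinearMap.id)
    (hJE : J ∘ₗ E = -(E ∘ₗ J))
    (hJint : ∀ x y : L, nijenhuis J x y = 0)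
    (hplus : ∀ x y : L, E x = x → E y = y → E ⁅x, y⁆ = ⁅x, y⁆)
    (hminus : ∀ x y : L, E x = -x → E y = -y → E ⁅x, y⁆ = -⁅x, y⁆)
    (J1 J2 : (ℂ ⊗[ℝ] L) →ₗ[ℝ] (ℂ ⊗[ℝ] L))
    (hJ1 : ∀ (a : ℂ) (x : L), J1 (a ⊗ₜ[ℝ] x) = a ⊗ₜ[ℝ] (J x))
    (hJ2p : ∀ (a : ℂ) (x : L), E x = x → J2 (a ⊗ₜ[ℝ] x) = (Complex.I * a) ⊗ₜ[ℝ] x)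
    (hJ2m : ∀ (a : ℂ) (x : L), E x = -x → J2 (a ⊗ₜ[ℝ] x) = (-Complex.I * a) ⊗ₜ[ℝ] x) :
    J1 ∘ₗ J1 = -LinearMap.id ∧
    J2 ∘ₗ J2 = -LinearMap.id ∧
    J1 ∘ₗ J2 = -(J2 ∘ₗ J1) ∧
    (∀ x y : ℂ ⊗[ℝ] L, nijenhuis J1 x y = 0) ∧
    (∀ x y : ℂ ⊗[ℝ] L, nijenhuis J2 x y = 0) ∧
    (∀ x y : ℂ ⊗[ℝ] L, nijenhuis (J1 ∘ₗ J2) x y = 0) := by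
  -- pointwise versions of the structural hypotheses
  have hJJ : ∀ z, J (J z) = -z := fun z => by
    have := LinearMap.congr_fun hJsq z; simpa using this
  have hEE : ∀ z, E (E z) = z := fun z => by
    have := LinearMap.congr_fun hEsq z; simpa using this
  have hJE' : ∀ z, J (E z) = -E (J z) := fun z => by
    have := LinearMap.congr_fun hJE z; simpa using this
  have hEJ : ∀ z, E (J z) = -J (E z) := fun z => by rw [hJE' z, neg_neg]
  -- `J2` acts on pure tensors as `a ⊗ z ↦ (i a) ⊗ (E z)`
  have hJ2' : ∀ (a : ℂ) (z : L), J2 (a ⊗ₜ[ℝ] z) = (Complex.I * a) ⊗ₜ[ℝ] (E z) := by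
    intro a z
    obtain ⟨p, m, hp, hm, hz⟩ := stmt10.decomp_aux E hEE z
    rw [hz]
    simp only [TensorProduct.tmul_add, map_add]
    rw [hJ2p a p hp, hJ2m a m hm, hp, hm]
    simp [TensorProduct.tmul_neg, neg_mul, TensorProduct.neg_tmul]
  have hNE := stmt10.NE_aux E hEE hplus hminus
  have hNK := stmt10.NK_aux J E hJJ hEE hEJ hJint hplus hminus
  refine ⟨?_, ?_, ?_, ?_, ?_, ?_⟩
  · -- J1² = -1
    apply LinearMap.ext; intro t
    induction t using TensorProduct.induction_on with
    | zero => simp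
    | tmul a x => simp [hJ1, hJJ, TensorProduct.tmul_neg]
    | add u v hu hv => simp only [map_add, hu, hv]
  · -- J2² = -1
    apply LinearMap.ext; intro t
    induction t using TensorProduct.induction_on with
    | zero => simp
    | tmul a x =>
      have hI : Complex.I * (Complex.I * a) = -a := by
        linear_combination a * Complex.I_mul_I
      simp only [LinearMap.comp_apply, hJ2', hEE, hI, LinearMap.neg_apply,
        LinearMap.id_apply, TensorProduct.neg_tmul]
    | add u v hu hv => simp only [map_add, hu, hv]
  · -- J1 J2 = -J2 J1
    apply LinearMap.ext; intro t
    induction t using TensorProduct.induction_on with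
    | zero => simp
    | tmul a x =>
      simp only [LinearMap.comp_apply, hJ2', hJ1, LinearMap.neg_apply, hEJ,
        TensorProduct.tmul_neg, neg_neg]
    | add u v hu hv => simp only [map_add, hu, hv]
  · -- J1 integrable
    apply stmt10.nij_tmul_reduce
    intro a b x y
    have hN : ⁅x, y⁆ + J ⁅J x, y⁆ + J ⁅x, J y⁆ - ⁅J x, J y⁆ = 0 := hJint x y
    simp only [nijenhuis, hJ1, LieAlgebra.ExtendScalars.bracket_tmul]
    rw [← TensorProduct.tmul_add, ← TensorProduct.tmul_add, ← TensorProduct.tmul_sub, hN,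
      TensorProduct.tmul_zero]
  · -- J2 integrable
    apply stmt10.nij_tmul_reduce
    intro a b x y
    simp only [nijenhuis, hJ2', LieAlgebra.ExtendScalars.bracket_tmul]
    rw [show Complex.I * (Complex.I * a * b) = -(a * b) from by
          linear_combination (a * b) * Complex.I_mul_I,
        show Complex.I * (a * (Complex.I * b)) = -(a * b) from by
          linear_combination (a * b) * Complex.I_mul_I,
        show Complex.I * a * (Complex.I * b) = -(a * b) from by
          linear_combination (a * b) * Complex.I_mul_I]
    simp only [TensorProduct.neg_tmul]
    have h2 : (a * b) ⊗ₜ[ℝ] (⁅x, y⁆ + ⁅E x, E y⁆ - E ⁅E x, y⁆ - E ⁅x, E y⁆)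
        = (0 : ℂ ⊗[ℝ] L) := by
      rw [hNE x y, TensorProduct.tmul_zero]
    rw [TensorProduct.tmul_sub, TensorProduct.tmul_sub, TensorProduct.tmul_add] at h2
    rw [← h2]; abel
  · -- J3 = J1 J2 integrable
    apply stmt10.nij_tmul_reduce
    intro a b x y
    simp only [nijenhuis, LinearMap.comp_apply, hJ2', hJ1,
      LieAlgebra.ExtendScalars.bracket_tmul]
    rw [show Complex.I * (Complex.I * a * b) = -(a * b) from by
          linear_combination (a * b) * Complex.I_mul_I,
        show Complex.I * (a * (Complex.I * b)) = -(a * b) from by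
          linear_combination (a * b) * Complex.I_mul_I,
        show Complex.I * a * (Complex.I * b) = -(a * b) from by
          linear_combination (a * b) * Complex.I_mul_I]
    simp only [TensorProduct.neg_tmul]
    have h2 : (a * b) ⊗ₜ[ℝ]
        (⁅x, y⁆ + ⁅J (E x), J (E y)⁆ - J (E ⁅J (E x), y⁆) - J (E ⁅x, J (E y)⁆))
        = (0 : ℂ ⊗[ℝ] L) := by
      rw [hNK x y, TensorProduct.tmul_zero]
    rw [TensorProduct.tmul_sub, TensorProduct.tmul_sub, TensorProduct.tmul_add] at h2
    rw [← h2]; abel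
end

section
/- Given a complex product structure {J,E} on a Lie algebra g with eigenspace decomposition g = g₊ ⊕ g₋, the bilinear map ∇ defined by ∇_{x₊}y₊ = -π₊J[x₊,Jy₊], ∇_{x₋}y₋ = -π₋J[x₋,Jy₋], ∇_{x₊}y₋ = π₋[x₊,y₋], ∇_{x₋}y₊ = π₊[x₋,y₊] (for x±,y± ∈ g±, with π± the projections) is torsion-free: ∇_x y - ∇_y x = [x,y] for all x,y ∈ g, and satisfies ∇_x(Jy) = J∇_x y and ∇_x(Ey) = E∇_x y. -/
/-- Given a complex product structure `{J,E}` on a Lie algebra `g` with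
eigenspace decomposition `g = g₊ ⊕ g₋`, the bilinear map `∇` defined by
`∇_{x₊}y₊ = -π₊J[x₊,Jy₊]`, `∇_{x₋}y₋ = -π₋J[x₋,Jy₋]`, `∇_{x₊}y₋ = π₋[x₊,y₋]`,
`∇_{x₋}y₊ = π₊[x₋,y₊]` (with `π± = ½(Id ± E)` the projections) is torsion-free:
`∇_x y - ∇_y x = [x,y]` for all `x, y ∈ g`, and satisfies `∇_x(Jy) = J∇_x y` and
`∇_x(Ey) = E∇_x y`. -/
theorem stmt11 (L : Type*) [LieRing L] [LieAlgebra ℝ L]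
    (J E : L →ₗ[ℝ] L)
    (hJsq : J ∘ₗ J = -LinearMap.id) (hEsq : E ∘ₗ E = LinearMap.id)
    (hJE : J ∘ₗ E = -(E ∘ₗ J))
    (hJint : ∀ x y : L, nijenhuis J x y = 0)
    (hplus : ∀ x y : L, E x = x → E y = y → E ⁅x, y⁆ = ⁅x, y⁆)
    (hminus : ∀ x y : L, E x = -x → E y = -y → E ⁅x, y⁆ = -⁅x, y⁆)
    (D : L →ₗ[ℝ] L →ₗ[ℝ] L)
    (hpp : ∀ x y : L, E x = x → E y = y →
      D x y = -((1/2 : ℝ) • (J ⁅x, J y⁆ + E (J ⁅x, J y⁆))))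
    (hmm : ∀ x y : L, E x = -x → E y = -y →
      D x y = -((1/2 : ℝ) • (J ⁅x, J y⁆ - E (J ⁅x, J y⁆))))
    (hpm : ∀ x y : L, E x = x → E y = -y →
      D x y = (1/2 : ℝ) • (⁅x, y⁆ - E ⁅x, y⁆))
    (hmp : ∀ x y : L, E x = -x → E y = y →
      D x y = (1/2 : ℝ) • (⁅x, y⁆ + E ⁅x, y⁆)) :
    (∀ x y : L, D x y - D y x = ⁅x, y⁆) ∧
    (∀ x y : L, D x (J y) = J (D x y)) ∧
    (∀ x y : L, D x (E y) = E (D x y)) := by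
  have hJ2 : ∀ x : L, J (J x) = -x := fun x => by
    have h := LinearMap.ext_iff.mp hJsq x; simpa using h
  have hE2 : ∀ x : L, E (E x) = x := fun x => by
    have h := LinearMap.ext_iff.mp hEsq x; simpa using h
  have hJE' : ∀ x : L, J (E x) = -E (J x) := fun x => by
    have h := LinearMap.ext_iff.mp hJE x; simpa using h
  have hJp : ∀ x : L, E x = x → E (J x) = -(J x) := by
    intro x hx
    have h := hJE' x
    rw [hx] at h
    exact neg_eq_iff_eq_neg.mp h.symm
  have hJm : ∀ x : L, E x = -x → E (J x) = J x := by
    intro x hx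
    have h := hJE' x
    rw [hx, map_neg] at h
    exact (neg_inj.mp h).symm
  have split : ∀ x : L, ∃ a b : L, E a = a ∧ E b = -b ∧ x = a + b := by
    intro x
    refine ⟨(1/2 : ℝ) • (x + E x), (1/2 : ℝ) • (x - E x), ?_, ?_, ?_⟩
    · rw [map_smul, map_add, hE2, add_comm]
    · rw [map_smul, map_sub, hE2, ← smul_neg, neg_sub]
    · module
  have hN : ∀ a b : L, J ⁅a, J b⁆ + J ⁅J a, b⁆ = ⁅J a, J b⁆ - ⁅a, b⁆ := by
    intro a b
    have h := hJint a b
    unfold nijenhuis at h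
    linear_combination (norm := module) h
  -- torsion cases
  have Tpp : ∀ a b : L, E a = a → E b = b → D a b - D b a = ⁅a, b⁆ := by
    intro a b ha hb
    rw [hpp a b ha hb, hpp b a hb ha]
    have e1 := hN a b
    have e2 : E (J ⁅a, J b⁆) + E (J ⁅J a, b⁆) = -⁅J a, J b⁆ - ⁅a, b⁆ := by
      rw [← map_add, e1, map_sub, hminus _ _ (hJp a ha) (hJp b hb), hplus a b ha hb]
    have e3 : J ⁅b, J a⁆ = -J ⁅J a, b⁆ := by
      rw [show ⁅b, J a⁆ = -⁅J a, b⁆ from (lie_skew b (J a)).symm, map_neg]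
    rw [e3, map_neg]
    linear_combination (norm := module) (-(1/2 : ℝ)) • e1 - (1/2 : ℝ) • e2
  have Tmm : ∀ a b : L, E a = -a → E b = -b → D a b - D b a = ⁅a, b⁆ := by
    intro a b ha hb
    rw [hmm a b ha hb, hmm b a hb ha]
    have e1 := hN a b
    have e2 : E (J ⁅a, J b⁆) + E (J ⁅J a, b⁆) = ⁅J a, J b⁆ + ⁅a, b⁆ := by
      rw [← map_add, e1, map_sub, hplus _ _ (hJm a ha) (hJm b hb), hminus a b ha hb]
      abel
    have e3 : J ⁅b, J a⁆ = -J ⁅J a, b⁆ := by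
      rw [show ⁅b, J a⁆ = -⁅J a, b⁆ from (lie_skew b (J a)).symm, map_neg]
    rw [e3, map_neg]
    linear_combination (norm := module) (-(1/2 : ℝ)) • e1 + (1/2 : ℝ) • e2
  have Tpm : ∀ a b : L, E a = a → E b = -b → D a b - D b a = ⁅a, b⁆ := by
    intro a b ha hb
    rw [hpm a b ha hb, hmp b a hb ha,
      show ⁅b, a⁆ = -⁅a, b⁆ from (lie_skew b a).symm, map_neg]
    module
  have Tmp : ∀ a b : L, E a = -a → E b = b → D a b - D b a = ⁅a, b⁆ := by
    intro a b ha hb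
    rw [hmp a b ha hb, hpm b a hb ha,
      show ⁅b, a⁆ = -⁅a, b⁆ from (lie_skew b a).symm, map_neg]
    module
  -- J-compatibility cases
  have Jpp : ∀ a b : L, E a = a → E b = b → D a (J b) = J (D a b) := by
    intro a b ha hb
    rw [hpm a (J b) ha (hJp b hb), hpp a b ha hb]
    simp only [map_neg, map_smul, map_add, hJ2, hJE', neg_neg]
    module
  have Jpm : ∀ a b : L, E a = a → E b = -b → D a (J b) = J (D a b) := by
    intro a b ha hb
    rw [hpp a (J b) ha (hJm b hb), hpm a b ha hb]
    simp only [hJ2, lie_neg, map_neg, map_smul, map_sub, map_add, hJE', neg_neg]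
    module
  have Jmp : ∀ a b : L, E a = -a → E b = b → D a (J b) = J (D a b) := by
    intro a b ha hb
    rw [hmm a (J b) ha (hJp b hb), hmp a b ha hb]
    simp only [hJ2, lie_neg, map_neg, map_smul, map_sub, map_add, hJE', neg_neg]
    module
  have Jmm : ∀ a b : L, E a = -a → E b = -b → D a (J b) = J (D a b) := by
    intro a b ha hb
    rw [hmp a (J b) ha (hJm b hb), hmm a b ha hb]
    simp only [map_neg, map_smul, map_sub, map_add, hJ2, hJE', neg_neg]
    module
  -- E-compatibility cases
  have Epl : ∀ x b : L, E b = b → E (D x b) = D x b := by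
    intro x b hb
    obtain ⟨p, m, hp, hm, rfl⟩ := split x
    simp only [map_add, LinearMap.add_apply]
    rw [hpp p b hp hb, hmp m b hm hb]
    simp only [map_neg, map_smul, map_add, hE2]
    module
  have Emi : ∀ x b : L, E b = -b → E (D x b) = -(D x b) := by
    intro x b hb
    obtain ⟨p, m, hp, hm, rfl⟩ := split x
    simp only [map_add, LinearMap.add_apply]
    rw [hpm p b hp hb, hmm m b hm hb]
    simp only [map_neg, map_smul, map_sub, map_add, hE2]
    module
  refine ⟨?_, ?_, ?_⟩
  · intro x y
    obtain ⟨a, c, ha, hc, rfl⟩ := split x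
    obtain ⟨b, d, hb, hd, rfl⟩ := split y
    simp only [map_add, LinearMap.add_apply, add_lie, lie_add]
    rw [← Tpp a b ha hb, ← Tpm a d ha hd, ← Tmp c b hc hb, ← Tmm c d hc hd]
    abel
  · intro x y
    obtain ⟨a, c, ha, hc, rfl⟩ := split x
    obtain ⟨b, d, hb, hd, rfl⟩ := split y
    simp only [map_add, LinearMap.add_apply]
    rw [Jpp a b ha hb, Jpm a d ha hd, Jmp c b hc hb, Jmm c d hc hd]
  · intro x y
    obtain ⟨b, d, hb, hd, rfl⟩ := split y
    have h1 : E (b + d) = b - d := by rw [map_add, hb, hd, sub_eq_add_neg]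
    rw [h1, map_sub, map_add, map_add, Epl x b hb, Emi x d hd]
    abel
end

section
/- The Lie algebra gl(2,ℂ), regarded as real, equipped with the hypercomplex structure determined by J₁e₁ = -e₂, J₁e₃ = -e₄, J₁e₅ = -e₆, J₁e₇ = -e₈, J₂e₁ = e₅, J₂e₂ = -e₆, J₂e₃ = e₇, J₂e₄ = -e₈ (where e₁,...,e₄ are the elementary matrices E₁₁,E₁₂,E₂₁,E₂₂ and e_{k+4} = i·e_k), admits no compatible left-invariant HKT metric: there is no inner product g on gl(2,ℂ)_ℝ, Hermitian with respect to J₁, J₂, J₃ = J₁J₂, satisfying the HKT condition. -/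
/-!
Evaluate the HKT condition for `J₁` and `J₂` at `(e 0, e 1, e 2)`. The bracket relations of
`gl(2,ℂ)` reduce the two cyclic sums to `g(e 1, e 2) - g(e 1, e 1)` and
`g(e 1, e 2) + g(e 0, e 0) - g(e 3, e 0) - g(e 2, e 1)`. Since `J₁` swaps `e 0 ↔ e 1` and
`e 2 ↔ e 3` up to sign, `J₁`-invariance of `g` gives `g(e 1, e 1) = g(e 0, e 0)` and
`g(e 0, e 3) = -g(e 1, e 2)`, so the equality of the two sums forces `g(e 0, e 0) = 0`.
-/

open Matrix

namespace Stmt12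

/-- The real basis `e₁,…,e₈` of `gl(2,ℂ)` : the elementary matrices and `i` times them. -/
noncomputable def e : Fin 8 → Matrix (Fin 2) (Fin 2) ℂ
  | 0 => Matrix.single 0 0 1
  | 1 => Matrix.single 0 1 1
  | 2 => Matrix.single 1 0 1
  | 3 => Matrix.single 1 1 1
  | 4 => Matrix.single 0 0 Complex.I
  | 5 => Matrix.single 0 1 Complex.I
  | 6 => Matrix.single 1 0 Complex.I
  | 7 => Matrix.single 1 1 Complex.I

theorem _root_.LinearMap.apply_eq_of_comp_self_eq_neg_id {R M : Type*} [Ring R] [AddCommGroup M]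
    [Module R M] {J : M →ₗ[R] M} (hJ : J ∘ₗ J = -LinearMap.id) {a b : M} (hab : J a = -b) :
    J b = a := by
  have := LinearMap.congr_fun hJ a
  rw [LinearMap.comp_apply, hab, map_neg] at this
  exact neg_injective this

def hktCyclicSum {R L : Type*} [CommRing R] [AddCommMonoid L] [Module R L] [Bracket L L]
    (g : L →ₗ[R] L →ₗ[R] R) (J : L →ₗ[R] L) (x y z : L) : R :=
  g ⁅J x, J y⁆ z + g ⁅J y, J z⁆ x + g ⁅J z, J x⁆ y

theorem e_zero_ne_zero : e 0 ≠ 0 := fun h => by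
  simpa [e] using congr_fun₂ h 0 0

section Brackets

-- Only the commutator bracket is global on matrices; the Lie ring structure supplies `neg_lie`
-- and `lie_neg`. It must not be in force at the theorem, whose bracket is the bare commutator.
attribute [local instance] LieRing.ofAssociativeRing

theorem lie_e1_e0 : ⁅e 1, e 0⁆ = -e 1 := by
  ext a b
  fin_cases a <;> fin_cases b <;> simp [e, Ring.lie_def, Matrix.mul_apply, Matrix.single]

theorem lie_e0_e3 : ⁅e 0, e 3⁆ = 0 := by
  ext a b
  fin_cases a <;> fin_cases b <;> simp [e, Ring.lie_def, Matrix.mul_apply, Matrix.single]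

theorem lie_e3_e1 : ⁅e 3, e 1⁆ = -e 1 := by
  ext a b
  fin_cases a <;> fin_cases b <;> simp [e, Ring.lie_def, Matrix.mul_apply, Matrix.single]

theorem lie_e4_e5 : ⁅e 4, e 5⁆ = -e 1 := by
  ext a b
  fin_cases a <;> fin_cases b <;> simp [e, Ring.lie_def, Matrix.mul_apply, Matrix.single]

theorem lie_e5_e6 : ⁅e 5, e 6⁆ = e 3 - e 0 := by
  ext a b
  fin_cases a <;> fin_cases b <;> simp [e, Ring.lie_def, Matrix.mul_apply, Matrix.single]

theorem lie_e6_e4 : ⁅e 6, e 4⁆ = -e 2 := by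
  ext a b
  fin_cases a <;> fin_cases b <;> simp [e, Ring.lie_def, Matrix.mul_apply, Matrix.single]

variable (g : Matrix (Fin 2) (Fin 2) ℂ →ₗ[ℝ] Matrix (Fin 2) (Fin 2) ℂ →ₗ[ℝ] ℝ)
  {J : Matrix (Fin 2) (Fin 2) ℂ →ₗ[ℝ] Matrix (Fin 2) (Fin 2) ℂ}

theorem hktCyclicSum_of_J₁ (h0 : J (e 0) = -e 1) (h1 : J (e 1) = e 0) (h2 : J (e 2) = -e 3) :
    hktCyclicSum g J (e 0) (e 1) (e 2) = g (e 1) (e 2) - g (e 1) (e 1) := by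
  simp only [hktCyclicSum, h0, h1, h2, neg_lie, lie_neg, neg_neg, lie_e1_e0, lie_e0_e3,
    lie_e3_e1, map_neg, map_zero, LinearMap.neg_apply, LinearMap.zero_apply]
  ring

theorem hktCyclicSum_of_J₂ (h0 : J (e 0) = e 4) (h1 : J (e 1) = -e 5) (h2 : J (e 2) = e 6) :
    hktCyclicSum g J (e 0) (e 1) (e 2) =
      g (e 1) (e 2) + g (e 0) (e 0) - g (e 3) (e 0) - g (e 2) (e 1) := by
  simp only [hktCyclicSum, h0, h1, h2, neg_lie, lie_neg, neg_neg, neg_sub, lie_e4_e5,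
    lie_e5_e6, lie_e6_e4, map_neg, map_sub, LinearMap.neg_apply, LinearMap.sub_apply]
  ring

end Brackets

theorem stmt12_general
    (J1 J2 : Matrix (Fin 2) (Fin 2) ℂ →ₗ[ℝ] Matrix (Fin 2) (Fin 2) ℂ)
    (hJ1sq : J1 ∘ₗ J1 = -LinearMap.id)
    (h1 : J1 (e 0) = -(e 1)) (h2 : J1 (e 2) = -(e 3))
    (h5 : J2 (e 0) = e 4) (h6 : J2 (e 1) = -(e 5))
    (h7 : J2 (e 2) = e 6) :
    ¬ ∃ g : Matrix (Fin 2) (Fin 2) ℂ →ₗ[ℝ] Matrix (Fin 2) (Fin 2) ℂ →ₗ[ℝ] ℝ,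
      (∀ x y, g x y = g y x) ∧
      (∀ x, x ≠ 0 → 0 < g x x) ∧
      (∀ x y, g (J1 x) (J1 y) = g x y) ∧
      (∀ x y, g (J2 x) (J2 y) = g x y) ∧
      (∀ x y, g (J1 (J2 x)) (J1 (J2 y)) = g x y) ∧
      (∀ x y z,
        g ⁅J1 x, J1 y⁆ z + g ⁅J1 y, J1 z⁆ x + g ⁅J1 z, J1 x⁆ y =
          g ⁅J2 x, J2 y⁆ z + g ⁅J2 y, J2 z⁆ x + g ⁅J2 z, J2 x⁆ y) ∧
      (∀ x y z,
        g ⁅J2 x, J2 y⁆ z + g ⁅J2 y, J2 z⁆ x + g ⁅J2 z, J2 x⁆ y =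
          g ⁅J1 (J2 x), J1 (J2 y)⁆ z + g ⁅J1 (J2 y), J1 (J2 z)⁆ x +
            g ⁅J1 (J2 z), J1 (J2 x)⁆ y) := by
  rintro ⟨g, hsym, hpos, hJ1g, -, -, hhkt, -⟩
  have hJ1e1 := LinearMap.apply_eq_of_comp_self_eq_neg_id hJ1sq h1
  have hJ1e3 := LinearMap.apply_eq_of_comp_self_eq_neg_id hJ1sq h2
  have hsums : hktCyclicSum g J1 (e 0) (e 1) (e 2) = hktCyclicSum g J2 (e 0) (e 1) (e 2) :=
    hhkt (e 0) (e 1) (e 2)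
  rw [hktCyclicSum_of_J₁ g h1 hJ1e1 h2, hktCyclicSum_of_J₂ g h5 h6 h7] at hsums
  have hg11 : g (e 1) (e 1) = g (e 0) (e 0) := by
    simpa only [h1, map_neg, LinearMap.neg_apply, neg_neg] using hJ1g (e 0) (e 0)
  have hg03 : -g (e 1) (e 2) = g (e 0) (e 3) := by
    simpa only [h1, hJ1e3, map_neg, LinearMap.neg_apply] using hJ1g (e 0) (e 3)
  linarith [hpos (e 0) e_zero_ne_zero, hsym (e 3) (e 0), hsym (e 2) (e 1)]

/-- The real Lie algebra `gl(2,ℂ)` equipped with the hypercomplex structure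
determined by `J₁e₁ = -e₂`, `J₁e₃ = -e₄`, `J₁e₅ = -e₆`, `J₁e₇ = -e₈`, `J₂e₁ = e₅`,
`J₂e₂ = -e₆`, `J₂e₃ = e₇`, `J₂e₄ = -e₈` admits no compatible left-invariant HKT metric:
there is no inner product `g`, Hermitian with respect to `J₁, J₂, J₃ = J₁J₂`, satisfying
the HKT condition. -/
theorem stmt12
    (J1 J2 : Matrix (Fin 2) (Fin 2) ℂ →ₗ[ℝ] Matrix (Fin 2) (Fin 2) ℂ)
    (hJ1sq : J1 ∘ₗ J1 = -LinearMap.id) (hJ2sq : J2 ∘ₗ J2 = -LinearMap.id)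
    (hanti : J1 ∘ₗ J2 = -(J2 ∘ₗ J1))
    (h1 : J1 (e 0) = -(e 1)) (h2 : J1 (e 2) = -(e 3))
    (h3 : J1 (e 4) = -(e 5)) (h4 : J1 (e 6) = -(e 7))
    (h5 : J2 (e 0) = e 4) (h6 : J2 (e 1) = -(e 5))
    (h7 : J2 (e 2) = e 6) (h8 : J2 (e 3) = -(e 7)) :
    ¬ ∃ g : Matrix (Fin 2) (Fin 2) ℂ →ₗ[ℝ] Matrix (Fin 2) (Fin 2) ℂ →ₗ[ℝ] ℝ,
      (∀ x y, g x y = g y x) ∧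
      (∀ x, x ≠ 0 → 0 < g x x) ∧
      (∀ x y, g (J1 x) (J1 y) = g x y) ∧
      (∀ x y, g (J2 x) (J2 y) = g x y) ∧
      (∀ x y, g (J1 (J2 x)) (J1 (J2 y)) = g x y) ∧
      (∀ x y z,
        g ⁅J1 x, J1 y⁆ z + g ⁅J1 y, J1 z⁆ x + g ⁅J1 z, J1 x⁆ y =
          g ⁅J2 x, J2 y⁆ z + g ⁅J2 y, J2 z⁆ x + g ⁅J2 z, J2 x⁆ y) ∧
      (∀ x y z,
        g ⁅J2 x, J2 y⁆ z + g ⁅J2 y, J2 z⁆ x + g ⁅J2 z, J2 x⁆ y =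
          g ⁅J1 (J2 x), J1 (J2 y)⁆ z + g ⁅J1 (J2 y), J1 (J2 z)⁆ x +
            g ⁅J1 (J2 z), J1 (J2 x)⁆ y) :=
  stmt12_general J1 J2 hJ1sq h1 h2 h5 h6 h7

end Stmt12
end

section
/- For the torsion-free connection ∇ = ∇^{CP} on sl(2n+1,ℝ) associated to the complex product structure {J,E}, and for elements x₊, y₊ ∈ s₊ with block data x₊ = [[A,0,0],[B,0,w₂],[v₁ᵗ,0,-tr A]] and y₊ = [[E,0,0],[F,0,z₂],[y₁ᵗ,0,-tr E]], one has ∇_{x₊} y₊ = [[AE,0,0],[BE + w₂y₁ᵗ, 0, Az₂ + Ew₂ + (tr A)z₂],[v₁ᵗE - (tr A)y₁ᵗ, 0, -tr(AE)]]. -/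
open Matrix

namespace Stmt15

/-- `(A, v, w) ↦ [[A, w], [vᵗ, -tr A]]`. -/
def Phi {ι : Type} [Fintype ι] (A : Matrix ι ι ℝ) (v w : ι → ℝ) :
    Matrix (ι ⊕ Unit) (ι ⊕ Unit) ℝ :=
  Matrix.fromBlocks A (Matrix.of fun i (_ : Unit) => w i)
    (Matrix.of fun (_ : Unit) j => v j) (Matrix.of fun _ _ => -A.trace)

/-- `J₀ = [[0,-Iₙ],[Iₙ,0]]`. -/
def J0 (n : ℕ) : Matrix (Fin n ⊕ Fin n) (Fin n ⊕ Fin n) ℝ :=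
  Matrix.fromBlocks 0 (-1) 1 0

/-- `E₀ = [[Iₙ,0],[0,-Iₙ]]`. -/
def E0 (n : ℕ) : Matrix (Fin n ⊕ Fin n) (Fin n ⊕ Fin n) ℝ :=
  Matrix.fromBlocks 1 0 0 (-1)

/-- Elements of `s₊`, in block form `[[A,0,0],[B,0,w₂],[v₁ᵗ,0,-tr A]]`. -/
def Pl {n : ℕ} (A B : Matrix (Fin n) (Fin n) ℝ) (v1 w2 : Fin n → ℝ) :
    Matrix ((Fin n ⊕ Fin n) ⊕ Unit) ((Fin n ⊕ Fin n) ⊕ Unit) ℝ :=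
  Phi (Matrix.fromBlocks A 0 B 0) (Sum.elim v1 0) (Sum.elim 0 w2)

end Stmt15

/-! The computation is done in the coordinates `(A, v, w) ↦ Phi A v w`. The Lie bracket of two
such matrices has a closed form in these coordinates, `J` and `E` act on them through the block
matrices `J₀` and `E₀`, and `X + E X = 2 π₊ X` keeps only the left block column of `A`, the upper
half of `v` and the lower half of `w`. Following `y₊ ↦ J y₊ ↦ [x₊, J y₊] ↦ J [x₊, J y₊]` through
these formulas in `n × n` blocks and projecting gives the result. -/

namespace Matrix

variable {α l m n o : Type*}

theorem trace_fromBlocks [Fintype m] [Fintype n] [AddCommMonoid α] (A : Matrix m m α)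
    (B : Matrix m n α) (C : Matrix n m α) (D : Matrix n n α) :
    (fromBlocks A B C D).trace = A.trace + D.trace := by
  simp [trace, Fintype.sum_sum_type]

theorem sumElim_vecMulVec_sumElim [Mul α] (u : l → α) (u' : m → α) (v : n → α) (v' : o → α) :
    vecMulVec (Sum.elim u u') (Sum.elim v v') =
      fromBlocks (vecMulVec u v) (vecMulVec u v') (vecMulVec u' v) (vecMulVec u' v') := by
  ext (i | i) (j | j) <;> rfl

end Matrix

namespace Stmt15

section Phi

variable {ι : Type} [Fintype ι]

theorem Phi_add (A A' : Matrix ι ι ℝ) (v v' w w' : ι → ℝ) :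
    Phi A v w + Phi A' v' w' = Phi (A + A') (v + v') (w + w') := by
  ext (i | i) (j | j) <;> simp [Phi, trace_add, add_comm]

theorem Phi_smul (c : ℝ) (A : Matrix ι ι ℝ) (v w : ι → ℝ) :
    c • Phi A v w = Phi (c • A) (c • v) (c • w) := by
  ext (i | i) (j | j) <;> simp [Phi, trace_smul]

theorem Phi_neg (A : Matrix ι ι ℝ) (v w : ι → ℝ) :
    -Phi A v w = Phi (-A) (-v) (-w) := by
  ext (i | i) (j | j) <;> simp [Phi, trace_neg]

theorem Phi_lie [DecidableEq ι] (A A' : Matrix ι ι ℝ) (v w v' w' : ι → ℝ) :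
    ⁅Phi A v w, Phi A' v' w'⁆ =
      Phi (⁅A, A'⁆ + vecMulVec w v' - vecMulVec w' v)
        (v ᵥ* A' - v' ᵥ* A + A'.trace • v - A.trace • v')
        (A *ᵥ w' - A' *ᵥ w + A.trace • w' - A'.trace • w) := by
  ext (i | i) (j | j)
  · simp [Phi, Ring.lie_def, mul_apply, vecMulVec_apply]
    ring
  · simp [Phi, Ring.lie_def, mul_apply, mulVec, dotProduct]
    ring
  · simp [Phi, Ring.lie_def, mul_apply, vecMul, dotProduct]
    ring
  · simp [Phi, Ring.lie_def, mul_apply, trace_mul_comm A, trace_vecMulVec]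
    rw [dotProduct_comm w', dotProduct_comm w, dotProduct, dotProduct]
    ring

end Phi

variable {n : ℕ}

theorem fromBlocks_mul_J0 (a b c d : Matrix (Fin n) (Fin n) ℝ) :
    fromBlocks a b c d * J0 n = fromBlocks b (-a) d (-c) := by
  simp [J0, fromBlocks_multiply]

theorem J0_mulVec_sumElim (u v : Fin n → ℝ) : J0 n *ᵥ Sum.elim u v = Sum.elim (-v) u := by
  simp [J0, fromBlocks_mulVec, neg_mulVec]

theorem fromBlocks_mul_E0 (a b c d : Matrix (Fin n) (Fin n) ℝ) :
    fromBlocks a b c d * E0 n = fromBlocks a (-b) c (-d) := by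
  simp [E0, fromBlocks_multiply]

theorem E0_mulVec_sumElim (u v : Fin n → ℝ) : E0 n *ᵥ Sum.elim u v = Sum.elim u (-v) := by
  simp [E0, fromBlocks_mulVec, neg_mulVec]

theorem neg_Pl (A B : Matrix (Fin n) (Fin n) ℝ) (v w : Fin n → ℝ) :
    -Pl A B v w = Pl (-A) (-B) (-v) (-w) := by
  simp [Pl, Phi_neg, fromBlocks_neg, ← Sum.elim_neg_neg]

theorem Pl_lie_Phi (A B E F : Matrix (Fin n) (Fin n) ℝ) (v w y z : Fin n → ℝ) :
    ⁅Pl A B v w, Phi (fromBlocks 0 (-E) 0 (-F)) (Sum.elim 0 (-y)) (Sum.elim z 0)⁆ =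
      Phi (fromBlocks (E * B - vecMulVec z v) (-(A * E)) (F * B) (-(B * E) - vecMulVec w y))
        (Sum.elim (y ᵥ* B - F.trace • v) (A.trace • y - v ᵥ* E))
        (Sum.elim (A *ᵥ z + E *ᵥ w + A.trace • z) (B *ᵥ z + F *ᵥ w + F.trace • w)) := by
  rw [Pl, Phi_lie]
  congr 1
  · simp [Ring.lie_def, fromBlocks_multiply, sumElim_vecMulVec_sumElim, sub_eq_add_neg,
      fromBlocks_neg, fromBlocks_add]
  · ext (i | i) <;> simp [vecMul_fromBlocks, trace_fromBlocks, neg_vecMul, vecMul_neg] <;> ring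
  · ext (i | i) <;> simp [fromBlocks_mulVec, trace_fromBlocks, neg_mulVec]

-- `X + E X = 2 π₊ X` in coordinates.
theorem Phi_add_Phi_mul_E0 (a b c d : Matrix (Fin n) (Fin n) ℝ) (p₁ p₂ q₁ q₂ : Fin n → ℝ) :
    Phi (fromBlocks a b c d) (Sum.elim p₁ p₂) (Sum.elim q₁ q₂) +
        Phi (fromBlocks a b c d * E0 n) (E0 n *ᵥ Sum.elim p₁ p₂) (-(E0 n *ᵥ Sum.elim q₁ q₂)) =
      (2 : ℝ) • Pl a c p₁ q₂ := by
  rw [fromBlocks_mul_E0, E0_mulVec_sumElim, E0_mulVec_sumElim, Phi_add, Pl, Phi_smul]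
  congr 1
  · simp [fromBlocks_add, two_smul]
  · ext (i | i) <;> simp [two_mul]
  · ext (i | i) <;> simp [two_mul]

/-- For the torsion-free connection `∇ = ∇^{CP}` on `sl(2n+1,ℝ)`
associated to the complex product structure `{J,E}` (so that on `s₊` one has
`∇_{x₊}y₊ = -π₊ J[x₊, Jy₊]` with `π₊ = ½(Id + E)`), and elements
`x₊ = [[A,0,0],[B,0,w₂],[v₁ᵗ,0,-tr A]]`, `y₊ = [[E,0,0],[F,0,z₂],[y₁ᵗ,0,-tr E]]` of `s₊`,
one has `∇_{x₊}y₊ = [[AE,0,0],[BE + w₂y₁ᵗ, 0, Az₂ + Ew₂ + (tr A)z₂],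
[v₁ᵗE - (tr A)y₁ᵗ, 0, -tr(AE)]]`. -/
theorem stmt15 (n : ℕ)
    (J E : Matrix ((Fin n ⊕ Fin n) ⊕ Unit) ((Fin n ⊕ Fin n) ⊕ Unit) ℝ →ₗ[ℝ]
      Matrix ((Fin n ⊕ Fin n) ⊕ Unit) ((Fin n ⊕ Fin n) ⊕ Unit) ℝ)
    (hJ : ∀ (A : Matrix (Fin n ⊕ Fin n) (Fin n ⊕ Fin n) ℝ) (v w : Fin n ⊕ Fin n → ℝ),
      J (Phi A v w) = Phi (A * J0 n) (-(J0 n *ᵥ v)) (-(J0 n *ᵥ w)))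
    (hE : ∀ (A : Matrix (Fin n ⊕ Fin n) (Fin n ⊕ Fin n) ℝ) (v w : Fin n ⊕ Fin n → ℝ),
      E (Phi A v w) = Phi (A * E0 n) (E0 n *ᵥ v) (-(E0 n *ᵥ w)))
    (D : Matrix ((Fin n ⊕ Fin n) ⊕ Unit) ((Fin n ⊕ Fin n) ⊕ Unit) ℝ →
      Matrix ((Fin n ⊕ Fin n) ⊕ Unit) ((Fin n ⊕ Fin n) ⊕ Unit) ℝ →
      Matrix ((Fin n ⊕ Fin n) ⊕ Unit) ((Fin n ⊕ Fin n) ⊕ Unit) ℝ)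
    (hD : ∀ (A B A' B' : Matrix (Fin n) (Fin n) ℝ) (v1 w2 v1' w2' : Fin n → ℝ),
      D (Pl A B v1 w2) (Pl A' B' v1' w2') =
        -((1/2 : ℝ) • (J ⁅Pl A B v1 w2, J (Pl A' B' v1' w2')⁆ +
          E (J ⁅Pl A B v1 w2, J (Pl A' B' v1' w2')⁆)))) :
    ∀ (A B Ey F : Matrix (Fin n) (Fin n) ℝ) (v1 w2 y1 z2 : Fin n → ℝ),
      D (Pl A B v1 w2) (Pl Ey F y1 z2) =
        Pl (A * Ey) (B * Ey + Matrix.vecMulVec w2 y1)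
          (v1 ᵥ* Ey - A.trace • y1) (A *ᵥ z2 + Ey *ᵥ w2 + A.trace • z2) := by
  intro A B Ey F v1 w2 y1 z2
  have hJy : J (Pl Ey F y1 z2) =
      Phi (fromBlocks 0 (-Ey) 0 (-F)) (Sum.elim 0 (-y1)) (Sum.elim z2 0) := by
    simp [Pl, hJ, fromBlocks_mul_J0, J0_mulVec_sumElim, ← Sum.elim_neg_neg]
  rw [hD, hJy, Pl_lie_Phi, hJ, fromBlocks_mul_J0, J0_mulVec_sumElim, J0_mulVec_sumElim,
    ← Sum.elim_neg_neg, ← Sum.elim_neg_neg, hE, Phi_add_Phi_mul_E0, smul_smul,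
    one_div_mul_cancel two_ne_zero, one_smul, neg_Pl]
  congr 1 <;> abel

end Stmt15
end

section
/- Let x̂ = x^{⊕2} ∈ sl(2n+1,ℂ) (viewed as a real Lie algebra via sl(2n+1,ℝ) ⊕ i·sl(2n+1,ℝ)) where x ∈ sl(2n+1,ℝ) is the block matrix with E₁₁ in the (2,1) block and zeros elsewhere, and let A ∈ End(sl(2n+1,ℝ)) be the map [[0, -Id],[Id, 0]] with respect to the decomposition sl(2n+1,ℝ) = s₊ ⊕ s₋. Then tr(A ∘ ad x) = 2n + 2; in particular the Koszul 1-form ψ₁(x̂) = 2·tr(A ∘ ad x) is nonzero. -/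
/-! Write `x = E_ab` with `a = inl (inr 0)`, `b = inl (inl 0)`, and let `∞` be the last index.
Each `ad x (E_pq) = δ_bp E_aq - δ_qa E_pb` is a commutator, hence traceless, so `J` acts on it
through the block formula `hJ`, although `hJ` leaves `J` free off `sl(2n+1,ℝ)`. The diagonal
coefficient of `J ∘ ad x` at `E_pq` is `1` when `q = a` (for each of the `2n+1` rows `p`), `1` at
`(p, q) = (b, ∞)`, and `0` otherwise, so the trace is `2n + 2`. -/

open Matrix

attribute [local instance 100] LieRing.ofAssociativeRing

namespace Stmt19

/-- `(A, v, w) ↦ [[A, w], [vᵗ, -tr A]]`. -/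
def Phi {ι : Type} [Fintype ι] (A : Matrix ι ι ℝ) (v w : ι → ℝ) :
    Matrix (ι ⊕ Unit) (ι ⊕ Unit) ℝ :=
  Matrix.fromBlocks A (Matrix.of fun i (_ : Unit) => w i)
    (Matrix.of fun (_ : Unit) j => v j) (Matrix.of fun _ _ => -A.trace)

/-- `J₀ = [[0,-Iₙ],[Iₙ,0]]`. -/
def J0 (n : ℕ) : Matrix (Fin n ⊕ Fin n) (Fin n ⊕ Fin n) ℝ :=
  Matrix.fromBlocks 0 (-1) 1 0

theorem trace_eq_sum_apply_single {R ι : Type*} [CommRing R] [Fintype ι] [DecidableEq ι]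
    (f : Matrix ι ι R →ₗ[R] Matrix ι ι R) :
    LinearMap.trace R _ f = ∑ p : ι × ι, f (single p.1 p.2 1) p.1 p.2 := by
  rw [LinearMap.trace_eq_matrix_trace R (stdBasis R ι ι), Matrix.trace]
  refine Finset.sum_congr rfl fun p _ => ?_
  simp [LinearMap.toMatrix_apply, ← stdBasis_eq_single, stdBasis]

theorem lie_single_single {R ι : Type*} [CommRing R] [Fintype ι] [DecidableEq ι]
    (a b p q : ι) :
    ⁅(single a b 1 : Matrix ι ι R), (single p q 1 : Matrix ι ι R)⁆ =
      (if b = p then single a q 1 else 0) - (if q = a then single p b 1 else 0) := by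
  rw [Ring.lie_def]
  congr 1 <;> split_ifs with h <;> simp [h, single_mul_single_of_ne]

theorem Phi_toBlocks_of_trace_eq_zero {ι : Type} [Fintype ι]
    (M : Matrix (ι ⊕ Unit) (ι ⊕ Unit) ℝ) (hM : M.trace = 0) :
    Phi M.toBlocks₁₁ (fun j => M (.inr ()) (.inl j)) (fun i => M (.inl i) (.inr ())) = M := by
  have hc : M (.inr ()) (.inr ()) = -M.toBlocks₁₁.trace := by
    rw [Matrix.trace, Fintype.sum_sum_type] at hM
    simp only [Matrix.trace, toBlocks₁₁, diag_apply, of_apply, Finset.univ_unique,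
      Finset.sum_singleton] at hM ⊢
    linarith
  ext (i | ⟨⟩) (j | ⟨⟩) <;> simp [Phi, toBlocks₁₁, hc]

theorem Phi_fromBlocks_single {m₁ m₂ : Type} [Fintype m₁] [Fintype m₂] [DecidableEq m₁]
    [DecidableEq m₂] (i : m₂) (j : m₁) :
    Phi (fromBlocks 0 0 (single i j (1 : ℝ)) 0) 0 0 =
      single (.inl (.inr i)) (.inl (.inl j)) 1 := by
  ext ((k | k) | ⟨⟩) ((l | l) | ⟨⟩) <;> simp [Phi, single, Matrix.trace, Fintype.sum_sum_type]

variable {n : ℕ}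

theorem mul_J0_apply_inr (A : Matrix (Fin n ⊕ Fin n) (Fin n ⊕ Fin n) ℝ) (i : Fin n ⊕ Fin n)
    (k : Fin n) :
    (A * J0 n) i (.inr k) = -A i (.inl k) := by
  simp [J0, mul_apply, Fintype.sum_sum_type, fromBlocks, one_apply]

theorem J0_mulVec_inl (v : Fin n ⊕ Fin n → ℝ) (k : Fin n) :
    (J0 n *ᵥ v) (.inl k) = -v (.inr k) := by
  simp [J0, mulVec, dotProduct, Fintype.sum_sum_type, fromBlocks, one_apply]

theorem J0_mulVec_inr (v : Fin n ⊕ Fin n → ℝ) (k : Fin n) :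
    (J0 n *ᵥ v) (.inr k) = v (.inl k) := by
  simp [J0, mulVec, dotProduct, Fintype.sum_sum_type, fromBlocks, one_apply]

section ComplexStructure

variable {J : Matrix ((Fin n ⊕ Fin n) ⊕ Unit) ((Fin n ⊕ Fin n) ⊕ Unit) ℝ →ₗ[ℝ]
      Matrix ((Fin n ⊕ Fin n) ⊕ Unit) ((Fin n ⊕ Fin n) ⊕ Unit) ℝ}
  (hJ : ∀ (A : Matrix (Fin n ⊕ Fin n) (Fin n ⊕ Fin n) ℝ) (v w : Fin n ⊕ Fin n → ℝ),
      J (Phi A v w) = Phi (A * J0 n) (-(J0 n *ᵥ v)) (-(J0 n *ᵥ w)))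
include hJ

theorem apply_of_trace_eq_zero {M : Matrix ((Fin n ⊕ Fin n) ⊕ Unit) ((Fin n ⊕ Fin n) ⊕ Unit) ℝ}
    (hM : M.trace = 0) :
    J M = Phi (M.toBlocks₁₁ * J0 n) (-(J0 n *ᵥ fun j => M (.inr ()) (.inl j)))
      (-(J0 n *ᵥ fun i => M (.inl i) (.inr ()))) :=
  (congrArg J (Phi_toBlocks_of_trace_eq_zero M hM)).symm.trans (hJ _ _ _)

theorem apply_single_sub_single_apply (z : Fin n) :
    J (single (.inl (.inr z)) (.inl (.inr z)) 1 - single (.inl (.inl z)) (.inl (.inl z)) 1)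
      (.inl (.inl z)) (.inl (.inr z)) = 1 := by
  rw [apply_of_trace_eq_zero hJ (by simp [trace_sub])]
  simp [Phi, mul_J0_apply_inr, toBlocks₁₁]

theorem apply_single_row_apply_of_ne (z : Fin n) {q : (Fin n ⊕ Fin n) ⊕ Unit}
    (hq : q ≠ .inl (.inr z)) :
    J (single (.inl (.inr z)) q 1) (.inl (.inl z)) q = if q = .inr () then 1 else 0 := by
  rw [apply_of_trace_eq_zero hJ (by simp [trace_single_eq_of_ne _ _ _ hq.symm])]
  rcases q with j | ⟨⟩
  · simp [Phi, mul_apply, toBlocks₁₁]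
  · simp [Phi, J0_mulVec_inl]

theorem apply_single_col_apply_of_ne (z : Fin n) {p : (Fin n ⊕ Fin n) ⊕ Unit}
    (hp : p ≠ .inl (.inl z)) :
    J (single p (.inl (.inl z)) 1) p (.inl (.inr z)) = -1 := by
  rw [apply_of_trace_eq_zero hJ (by simp [trace_single_eq_of_ne _ _ _ hp])]
  rcases p with i | ⟨⟩
  · simp [Phi, mul_J0_apply_inr, toBlocks₁₁]
  · simp [Phi, J0_mulVec_inr]

theorem apply_lie_single_apply_self (z : Fin n) (p q : (Fin n ⊕ Fin n) ⊕ Unit) :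
    J ⁅(single (.inl (.inr z)) (.inl (.inl z)) 1 :
          Matrix ((Fin n ⊕ Fin n) ⊕ Unit) ((Fin n ⊕ Fin n) ⊕ Unit) ℝ),
        (single p q 1 : Matrix _ _ ℝ)⁆ p q =
      (if q = .inl (.inr z) then 1 else 0) +
        (if p = .inl (.inl z) ∧ q = .inr () then 1 else 0) := by
  rw [lie_single_single]
  rcases eq_or_ne p (.inl (.inl z)) with rfl | hp <;>
    rcases eq_or_ne q (.inl (.inr z)) with rfl | hq
  · simp [apply_single_sub_single_apply hJ]
  · simp [hq, apply_single_row_apply_of_ne hJ z hq]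
  · simp [hp, hp.symm, apply_single_col_apply_of_ne hJ z hp]
  · simp [hp, hp.symm, hq]

end ComplexStructure

theorem sum_ite_snd_add_ite_eq {ι : Type*} [Fintype ι] [DecidableEq ι] (a b c : ι) :
    ∑ p : ι × ι, ((if p.2 = a then 1 else 0) + (if p.1 = b ∧ p.2 = c then 1 else 0) : ℝ) =
      Fintype.card ι + 1 := by
  simp_rw [← Prod.ext_iff (y := (b, c))]
  rw [Finset.sum_add_distrib, Fintype.sum_prod_type]
  simp

/-- Let `x ∈ sl(2n+1,ℝ)` be the block matrix with `E₁₁` in the `(2,1)`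
block and zeros elsewhere, and let `A` be the endomorphism of `sl(2n+1,ℝ)` given by
`[[0,-Id],[Id,0]]` with respect to the decomposition `s₊ ⊕ s₋` (i.e. the complex
structure `J`).  Then `tr(A ∘ ad x) = 2n + 2`; in particular the Koszul `1`-form
satisfies `ψ₁(x̂) = 2 tr(A ∘ ad x) ≠ 0`. -/
theorem stmt19 (n : ℕ) (hn : 0 < n)
    (J : Matrix ((Fin n ⊕ Fin n) ⊕ Unit) ((Fin n ⊕ Fin n) ⊕ Unit) ℝ →ₗ[ℝ]
      Matrix ((Fin n ⊕ Fin n) ⊕ Unit) ((Fin n ⊕ Fin n) ⊕ Unit) ℝ)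
    (hJ : ∀ (A : Matrix (Fin n ⊕ Fin n) (Fin n ⊕ Fin n) ℝ) (v w : Fin n ⊕ Fin n → ℝ),
      J (Phi A v w) = Phi (A * J0 n) (-(J0 n *ᵥ v)) (-(J0 n *ᵥ w))) :
    LinearMap.trace ℝ _
        (J ∘ₗ (LieAlgebra.ad ℝ
          (Matrix ((Fin n ⊕ Fin n) ⊕ Unit) ((Fin n ⊕ Fin n) ⊕ Unit) ℝ)
          (Phi (Matrix.fromBlocks 0 0
            (Matrix.single ⟨0, hn⟩ ⟨0, hn⟩ (1 : ℝ)) 0) 0 0))) =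
      2 * (n : ℝ) + 2 ∧
    (2 : ℝ) * (2 * (n : ℝ) + 2) ≠ 0 := by
  refine ⟨?_, by positivity⟩
  rw [Phi_fromBlocks_single, trace_eq_sum_apply_single]
  simp only [LinearMap.comp_apply, LieAlgebra.ad_apply, apply_lie_single_apply_self hJ,
    sum_ite_snd_add_ite_eq, Fintype.card_sum, Fintype.card_fin, Fintype.card_unit]
  push_cast
  ring

end Stmt19
end
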